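/- arXiv:2211.14757 — 5 statements merged into one kernel-verified Lean document; each statement's English description precedes it below -/
import Mathlib

section
/- Let W be an α'-Hölder continuous path on [0,∞) with W(0)=0 and let μ>0. Then the map τ ↦ ⟦W⟧_{α,[0,τ]} + μτ^{1-α}, where ⟦W⟧_{α,[0,τ]} = sup_{0≤s<t≤τ} |W(t)-W(s)|/(t-s)^α and 0<α<α'<1, is continuous and strictly increasing in τ, and tends to 0 as τ→0⁺ and to +∞ as τ→∞. Consequently there is a unique τ₀>0 with ⟦W⟧_{α,[0,τ₀]} + μτ₀^{1-α} = μ. -/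
/-!
On `[a, c]` split at `b`, a chord `(s, t)` either lies on one side of `b` or, by the triangle
inequality and `(t - s)^α ≥ max ((b - s)^α, (t - b)^α)`, has Hölder ratio at most the sum of the
ratios of `(s, b)` and `(b, t)`; hence `⟦W⟧_{[a,c]} ≤ ⟦W⟧_{[a,b]} + ⟦W⟧_{[b,c]}`. An `α'`-Hölder
bound with constant `C` gives `⟦W⟧_{[b,c]} ≤ C (c - b)^(α' - α)`, so `τ ↦ ⟦W⟧_{[0,τ]}` is
nondecreasing and `(α' - α)`-Hölder, in particular continuous and `0` at `τ = 0`. Adding the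
strictly increasing `μ τ^(1 - α)` gives a continuous strictly increasing function from `0` to `∞`,
which takes the value `μ` exactly once.
-/

open Set Filter

/-- The `α`-Hölder seminorm of a path `W` over the interval `[a,b]`. -/
noncomputable def hoSemi {E : Type*} [NormedAddCommGroup E] (α : ℝ) (W : ℝ → E) (a b : ℝ) : ℝ :=
  sSup {c : ℝ | ∃ s t : ℝ, a ≤ s ∧ s < t ∧ t ≤ b ∧ c = ‖W t - W s‖ / (t - s) ^ α}

open Topology

variable {E : Type*} [NormedAddCommGroup E]

def holderRatios (α : ℝ) (W : ℝ → E) (a b : ℝ) : Set ℝ :=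
  {c : ℝ | ∃ s t : ℝ, a ≤ s ∧ s < t ∧ t ≤ b ∧ c = ‖W t - W s‖ / (t - s) ^ α}

section Ratios

variable {α α' C a a' b b' c r s t : ℝ} {W : ℝ → E}

theorem hoSemi_eq_sSup_holderRatios : hoSemi α W a b = sSup (holderRatios α W a b) := rfl

theorem div_rpow_le_mul_rpow_sub {x h : ℝ} (hh : 0 < h) (hx : x ≤ C * h ^ α') :
    x / h ^ α ≤ C * h ^ (α' - α) := by
  rw [Real.rpow_sub hh, ← mul_div_assoc]
  gcongr

theorem holderRatio_le_add (hα : 0 ≤ α) (hsb : s < b) (hbt : b < t) :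
    ‖W t - W s‖ / (t - s) ^ α ≤ ‖W b - W s‖ / (b - s) ^ α + ‖W t - W b‖ / (t - b) ^ α := by
  have hsb' : 0 < b - s := by linarith
  have hbt' : 0 < t - b := by linarith
  calc ‖W t - W s‖ / (t - s) ^ α
      ≤ (‖W b - W s‖ + ‖W t - W b‖) / (t - s) ^ α := by
        rw [add_comm]
        exact div_le_div_of_nonneg_right (norm_sub_le_norm_sub_add_norm_sub _ _ _)
          (Real.rpow_nonneg (by linarith) α)
    _ = ‖W b - W s‖ / (t - s) ^ α + ‖W t - W b‖ / (t - s) ^ α := add_div _ _ _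
    _ ≤ ‖W b - W s‖ / (b - s) ^ α + ‖W t - W b‖ / (t - b) ^ α := by
        gcongr

theorem nonneg_of_mem_holderRatios (hr : r ∈ holderRatios α W a b) : 0 ≤ r := by
  obtain ⟨s, t, -, hst, -, rfl⟩ := hr
  exact div_nonneg (norm_nonneg _) (Real.rpow_nonneg (by linarith) α)

theorem hoSemi_nonneg : 0 ≤ hoSemi α W a b :=
  Real.sSup_nonneg fun _ ↦ nonneg_of_mem_holderRatios

theorem hoSemi_of_le (hba : b ≤ a) : hoSemi α W a b = 0 := by
  have hempty : holderRatios α W a b = ∅ :=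
    eq_empty_of_forall_notMem fun r ⟨s, t, has, hst, htb, _⟩ ↦ by linarith
  rw [hoSemi_eq_sSup_holderRatios, hempty, Real.sSup_empty]

theorem le_hoSemi (hbdd : BddAbove (holderRatios α W a b)) (has : a ≤ s) (hst : s < t)
    (htb : t ≤ b) : ‖W t - W s‖ / (t - s) ^ α ≤ hoSemi α W a b :=
  le_csSup hbdd ⟨s, t, has, hst, htb, rfl⟩

theorem holderRatios_subset (ha : a ≤ a') (hb : b' ≤ b) :
    holderRatios α W a' b' ⊆ holderRatios α W a b := by
  rintro r ⟨s, t, has, hst, htb, rfl⟩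
  exact ⟨s, t, ha.trans has, hst, htb.trans hb, rfl⟩

theorem hoSemi_mono (ha : a ≤ a') (hb : b' ≤ b) (hbdd : BddAbove (holderRatios α W a b)) :
    hoSemi α W a' b' ≤ hoSemi α W a b := by
  rcases (holderRatios α W a' b').eq_empty_or_nonempty with h | h
  · rw [hoSemi_eq_sSup_holderRatios, h, Real.sSup_empty]
    exact hoSemi_nonneg
  · exact csSup_le_csSup hbdd h (holderRatios_subset ha hb)

theorem hoSemi_le_add (hα : 0 ≤ α) (hab : BddAbove (holderRatios α W a b))
    (hbc : BddAbove (holderRatios α W b c)) :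
    hoSemi α W a c ≤ hoSemi α W a b + hoSemi α W b c := by
  have hab₀ : 0 ≤ hoSemi α W a b := hoSemi_nonneg
  have hbc₀ : 0 ≤ hoSemi α W b c := hoSemi_nonneg
  refine Real.sSup_le ?_ (by positivity)
  rintro r ⟨s, t, has, hst, htc, rfl⟩
  rcases le_or_gt t b with htb | hbt
  · linarith [le_hoSemi hab has hst htb]
  rcases le_or_gt b s with hbs | hsb
  · linarith [le_hoSemi hbc hbs hst htc]
  linarith [holderRatio_le_add (W := W) hα hsb hbt, le_hoSemi hab has hsb le_rfl,
    le_hoSemi hbc le_rfl hbt htc]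

end Ratios

section Holder

variable {α α' C a b c T : ℝ} {W : ℝ → E}

theorem holder_bound_max_zero {I : Set ℝ}
    (hW : ∀ s ∈ I, ∀ t ∈ I, ‖W t - W s‖ ≤ C * |t - s| ^ α') :
    ∀ s ∈ I, ∀ t ∈ I, ‖W t - W s‖ ≤ max C 0 * |t - s| ^ α' :=
  fun s hs t ht ↦ (hW s hs t ht).trans (by gcongr; exact le_max_left _ _)

theorem le_of_mem_holderRatios (hαα' : α ≤ α') (hC : 0 ≤ C)
    (hW : ∀ s ∈ Icc a b, ∀ t ∈ Icc a b, ‖W t - W s‖ ≤ C * |t - s| ^ α') {r : ℝ}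
    (hr : r ∈ holderRatios α W a b) : r ≤ C * (b - a) ^ (α' - α) := by
  obtain ⟨s, t, has, hst, htb, rfl⟩ := hr
  have hts : 0 < t - s := by linarith
  have hWst := hW s ⟨has, by linarith⟩ t ⟨by linarith, htb⟩
  rw [abs_of_pos hts] at hWst
  calc ‖W t - W s‖ / (t - s) ^ α ≤ C * (t - s) ^ (α' - α) := div_rpow_le_mul_rpow_sub hts hWst
    _ ≤ C * (b - a) ^ (α' - α) := by gcongr

theorem hoSemi_le_of_holder (hαα' : α ≤ α') (hC : 0 ≤ C) (hab : a ≤ b)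
    (hW : ∀ s ∈ Icc a b, ∀ t ∈ Icc a b, ‖W t - W s‖ ≤ C * |t - s| ^ α') :
    hoSemi α W a b ≤ C * (b - a) ^ (α' - α) :=
  Real.sSup_le (fun _ ↦ le_of_mem_holderRatios hαα' hC hW)
    (mul_nonneg hC (Real.rpow_nonneg (sub_nonneg.2 hab) _))

theorem bddAbove_holderRatios (hαα' : α ≤ α')
    (hW : ∀ T, a < T → ∃ C, ∀ s ∈ Icc a T, ∀ t ∈ Icc a T, ‖W t - W s‖ ≤ C * |t - s| ^ α')
    (b : ℝ) : BddAbove (holderRatios α W a b) := by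
  rcases le_or_gt b a with hba | hab
  · refine ⟨0, fun r ⟨s, t, has, hst, htb, _⟩ ↦ ?_⟩
    linarith
  · obtain ⟨C, hC⟩ := hW b hab
    exact ⟨_, fun _ ↦ le_of_mem_holderRatios hαα' (le_max_right C 0) (holder_bound_max_zero hC)⟩

theorem monotone_hoSemi (hαα' : α ≤ α')
    (hW : ∀ T, a < T → ∃ C, ∀ s ∈ Icc a T, ∀ t ∈ Icc a T, ‖W t - W s‖ ≤ C * |t - s| ^ α') :
    Monotone (hoSemi α W a) :=
  fun _ _ hbc ↦ hoSemi_mono le_rfl hbc (bddAbove_holderRatios hαα' hW _)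

theorem hoSemi_sub_hoSemi_le (hα : 0 ≤ α) (hαα' : α ≤ α') (hC : 0 ≤ C)
    (hW : ∀ s ∈ Icc a T, ∀ t ∈ Icc a T, ‖W t - W s‖ ≤ C * |t - s| ^ α')
    (hab : a ≤ b) (hbc : b ≤ c) (hcT : c ≤ T) :
    hoSemi α W a c - hoSemi α W a b ≤ C * (c - b) ^ (α' - α) := by
  have hWon {b' c' : ℝ} (hb' : a ≤ b') (hc' : c' ≤ T) :
      ∀ s ∈ Icc b' c', ∀ t ∈ Icc b' c', ‖W t - W s‖ ≤ C * |t - s| ^ α' :=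
    fun s hs t ht ↦ hW s ⟨hb'.trans hs.1, hs.2.trans hc'⟩ t ⟨hb'.trans ht.1, ht.2.trans hc'⟩
  have hbdd {b' c' : ℝ} (hb' : a ≤ b') (hc' : c' ≤ T) : BddAbove (holderRatios α W b' c') :=
    ⟨_, fun _ ↦ le_of_mem_holderRatios hαα' hC (hWon hb' hc')⟩
  linarith [hoSemi_le_add (W := W) hα (hbdd le_rfl (hbc.trans hcT)) (hbdd hab hcT),
    hoSemi_le_of_holder hαα' hC hbc (hWon hab hcT)]

theorem abs_hoSemi_sub_hoSemi_le (hα : 0 ≤ α) (hαα' : α ≤ α') (hC : 0 ≤ C)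
    (hW : ∀ s ∈ Icc a T, ∀ t ∈ Icc a T, ‖W t - W s‖ ≤ C * |t - s| ^ α')
    (hb : b ∈ Icc a T) (hc : c ∈ Icc a T) :
    |hoSemi α W a c - hoSemi α W a b| ≤ C * |c - b| ^ (α' - α) := by
  wlog hbc : b ≤ c generalizing b c
  · rw [abs_sub_comm, abs_sub_comm c]
    exact this hc hb (le_of_not_ge hbc)
  have hbdd : BddAbove (holderRatios α W a c) :=
    ⟨_, fun _ ↦ le_of_mem_holderRatios hαα' hC fun s hs t ht ↦
      hW s ⟨hs.1, hs.2.trans hc.2⟩ t ⟨ht.1, ht.2.trans hc.2⟩⟩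
  rw [abs_of_nonneg (sub_nonneg.2 (hoSemi_mono le_rfl hbc hbdd)), abs_of_nonneg (sub_nonneg.2 hbc)]
  exact hoSemi_sub_hoSemi_le hα hαα' hC hW hb.1 hbc hc.2

theorem continuousOn_hoSemi_Icc (hα : 0 ≤ α) (hαα' : α < α') (hC : 0 ≤ C)
    (hW : ∀ s ∈ Icc a T, ∀ t ∈ Icc a T, ‖W t - W s‖ ≤ C * |t - s| ^ α') :
    ContinuousOn (hoSemi α W a) (Icc a T) := by
  intro b hb
  rw [ContinuousWithinAt, tendsto_iff_norm_sub_tendsto_zero]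
  have hbound : Tendsto (fun c ↦ C * |c - b| ^ (α' - α)) (𝓝[Icc a T] b) (𝓝 0) := by
    have hcont : Continuous fun c ↦ C * |c - b| ^ (α' - α) :=
      continuous_const.mul ((Real.continuous_rpow_const (by linarith)).comp (by fun_prop))
    simpa [Real.zero_rpow (sub_ne_zero.2 hαα'.ne')] using
      (hcont.tendsto b).mono_left nhdsWithin_le_nhds
  refine squeeze_zero' (Eventually.of_forall fun _ ↦ norm_nonneg _) ?_ hbound
  filter_upwards [self_mem_nhdsWithin] with c hc
  exact abs_hoSemi_sub_hoSemi_le hα hαα'.le hC hW hb hc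

theorem continuousOn_hoSemi_Ici (hα : 0 ≤ α) (hαα' : α < α')
    (hW : ∀ T, a < T → ∃ C, ∀ s ∈ Icc a T, ∀ t ∈ Icc a T, ‖W t - W s‖ ≤ C * |t - s| ^ α') :
    ContinuousOn (hoSemi α W a) (Ici a) := by
  intro b hb
  obtain ⟨C, hC⟩ := hW (b + 1) (by linarith [mem_Ici.1 hb])
  refine ((continuousOn_hoSemi_Icc hα hαα' (le_max_right C 0) (holder_bound_max_zero hC)) b
    ⟨hb, by linarith⟩).mono_of_mem_nhdsWithin ?_
  rw [← Ici_inter_Iic]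
  exact inter_mem_nhdsWithin _ (Iic_mem_nhds (lt_add_one b))

end Holder

theorem stmt0_general {d : ℕ} (W : ℝ → (Fin d → ℝ)) (α α' μ : ℝ)
    (hα : 0 < α) (hαα' : α < α') (hα'1 : α' < 1) (hμ : 0 < μ)
    (hHolder : ∀ T : ℝ, 0 < T → ∃ C : ℝ, ∀ s ∈ Icc (0:ℝ) T, ∀ t ∈ Icc (0:ℝ) T,
      ‖W t - W s‖ ≤ C * |t - s| ^ α') :
    ContinuousOn (fun τ => hoSemi α W 0 τ + μ * τ ^ (1 - α)) (Ioi 0) ∧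
    StrictMonoOn (fun τ => hoSemi α W 0 τ + μ * τ ^ (1 - α)) (Ioi 0) ∧
    Tendsto (fun τ => hoSemi α W 0 τ + μ * τ ^ (1 - α)) (nhdsWithin 0 (Ioi 0)) (nhds 0) ∧
    Tendsto (fun τ => hoSemi α W 0 τ + μ * τ ^ (1 - α)) atTop atTop ∧
    ∃! τ₀ : ℝ, 0 < τ₀ ∧ hoSemi α W 0 τ₀ + μ * τ₀ ^ (1 - α) = μ := by
  set F := fun τ => hoSemi α W 0 τ + μ * τ ^ (1 - α)
  have h1α : 0 < 1 - α := by linarith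
  have hF0 : F 0 = 0 := by simp [F, hoSemi_of_le (le_refl (0 : ℝ)), Real.zero_rpow h1α.ne']
  have hcont : ContinuousOn F (Ici 0) :=
    (continuousOn_hoSemi_Ici hα.le hαα' hHolder).add
      (continuous_const.mul (Real.continuous_rpow_const h1α.le)).continuousOn
  have hmono : StrictMonoOn F (Ici 0) := fun σ hσ τ hτ hστ ↦
    add_lt_add_of_le_of_lt (monotone_hoSemi hαα'.le hHolder hστ.le)
      (mul_lt_mul_of_pos_left (Real.strictMonoOn_rpow_Ici_of_exponent_pos h1α hσ hτ hστ) hμ)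
  have htop : Tendsto F atTop atTop :=
    tendsto_atTop_mono (fun _ ↦ le_add_of_nonneg_left hoSemi_nonneg)
      ((tendsto_rpow_atTop h1α).const_mul_atTop hμ)
  refine ⟨hcont.mono Ioi_subset_Ici_self, hmono.mono Ioi_subset_Ici_self, ?_, htop, ?_⟩
  · simpa only [ContinuousWithinAt, hF0] using (hcont 0 self_mem_Ici).mono Ioi_subset_Ici_self
  · have hμF : μ ∈ Ioi (F 0) := by rwa [mem_Ioi, hF0]
    obtain ⟨τ₀, hτ₀, hFτ₀⟩ := intermediate_value_Ioi hcont htop hμF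
    exact ⟨τ₀, ⟨hτ₀, hFτ₀⟩, fun τ ⟨hτ, hFτ⟩ ↦
      hmono.injOn (mem_Ici_of_Ioi hτ) (mem_Ici_of_Ioi hτ₀) (hFτ.trans hFτ₀.symm)⟩

/-- For a locally `α'`-Hölder path `W` with `W 0 = 0` and `μ > 0`,
the map `τ ↦ ⟦W⟧_{α,[0,τ]} + μ τ^(1-α)` is continuous and strictly increasing on `(0,∞)`,
tends to `0` as `τ → 0⁺` and to `∞` as `τ → ∞`; hence there is a unique `τ₀ > 0` at which
it equals `μ`. -/
theorem stmt0 {d : ℕ} (W : ℝ → (Fin d → ℝ)) (α α' μ : ℝ)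
    (hα : 0 < α) (hαα' : α < α') (hα'1 : α' < 1) (hμ : 0 < μ) (hW0 : W 0 = 0)
    (hHolder : ∀ T : ℝ, 0 < T → ∃ C : ℝ, ∀ s ∈ Icc (0:ℝ) T, ∀ t ∈ Icc (0:ℝ) T,
      ‖W t - W s‖ ≤ C * |t - s| ^ α') :
    ContinuousOn (fun τ => hoSemi α W 0 τ + μ * τ ^ (1 - α)) (Ioi 0) ∧
    StrictMonoOn (fun τ => hoSemi α W 0 τ + μ * τ ^ (1 - α)) (Ioi 0) ∧
    Tendsto (fun τ => hoSemi α W 0 τ + μ * τ ^ (1 - α)) (nhdsWithin 0 (Ioi 0)) (nhds 0) ∧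
    Tendsto (fun τ => hoSemi α W 0 τ + μ * τ ^ (1 - α)) atTop atTop ∧
    ∃! τ₀ : ℝ, 0 < τ₀ ∧ hoSemi α W 0 τ₀ + μ * τ₀ ^ (1 - α) = μ :=
  stmt0_general W α α' μ hα hαα' hα'1 hμ hHolder
end

section
/- Let W : ℝ → ℝ^d be locally α'-Hölder, 0<α<α'<1, μ∈(0,1). Define forward and backward stopping times T(W) = inf{τ>0 : ⟦W⟧_{α,[0,τ]} + μτ^{1-α} ≥ μ} and T̂(W) = sup{τ<0 : ⟦W⟧_{α,[τ,0]} + μ|τ|^{1-α} ≥ μ}. Let θ_s denote the time shift (θ_s W)(t) = W(t+s) − W(s). Then T(W) = −T̂(θ_{T(W)} W) and T̂(W) = −T(θ_{T̂(W)} W). -/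
open Set Filter

/-- Forward stopping time `T(W) = inf{τ>0 : ⟦W⟧_{α,[0,τ]} + μ τ^(1-α) ≥ μ}`. -/
noncomputable def fwdT {E : Type*} [NormedAddCommGroup E] (α μ : ℝ) (W : ℝ → E) : ℝ :=
  sInf {τ : ℝ | 0 < τ ∧ μ ≤ hoSemi α W 0 τ + μ * τ ^ (1 - α)}

/-- Backward stopping time `T̂(W) = sup{τ<0 : ⟦W⟧_{α,[τ,0]} + μ |τ|^(1-α) ≥ μ}`. -/
noncomputable def bwdT {E : Type*} [NormedAddCommGroup E] (α μ : ℝ) (W : ℝ → E) : ℝ :=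
  sSup {τ : ℝ | τ < 0 ∧ μ ≤ hoSemi α W τ 0 + μ * |τ| ^ (1 - α)}

/-- The Wiener shift `(θ_s W)(t) = W(t+s) − W(s)`. -/
def shiftW {E : Type*} [NormedAddCommGroup E] (s : ℝ) (W : ℝ → E) : ℝ → E :=
  fun t => W (t + s) - W s

open Topology

namespace Stmt2Aux

variable {E : Type*} [NormedAddCommGroup E]

def hoSet (α : ℝ) (W : ℝ → E) (a b : ℝ) : Set ℝ :=
  {c : ℝ | ∃ s t : ℝ, a ≤ s ∧ s < t ∧ t ≤ b ∧ c = ‖W t - W s‖ / (t - s) ^ α}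

lemma hoSemi_def (α : ℝ) (W : ℝ → E) (a b : ℝ) : hoSemi α W a b = sSup (hoSet α W a b) := rfl

lemma hoSet_nonempty {a b : ℝ} (hab : a < b) (α : ℝ) (W : ℝ → E) : (hoSet α W a b).Nonempty :=
  ⟨_, a, b, le_refl a, hab, le_refl b, rfl⟩

lemma hoSet_ub {α α' : ℝ} (hα : 0 < α) (hαα' : α < α') {W : ℝ → E} {a b C : ℝ}
    (hC0 : 0 ≤ C)
    (hC : ∀ s t : ℝ, a ≤ s → s < t → t ≤ b → ‖W t - W s‖ ≤ C * (t - s) ^ α') :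
    ∀ c ∈ hoSet α W a b, c ≤ C * (b - a) ^ (α' - α) := by
  rintro c ⟨s, t, hs, hst, ht, rfl⟩
  have hts : (0:ℝ) < t - s := sub_pos.2 hst
  have hba : t - s ≤ b - a := by linarith
  have h1 : ‖W t - W s‖ ≤ C * (t - s) ^ (α' - α) * (t - s) ^ α := by
    calc ‖W t - W s‖ ≤ C * (t - s) ^ α' := hC s t hs hst ht
    _ = C * (t - s) ^ (α' - α) * (t - s) ^ α := by
        rw [mul_assoc, ← Real.rpow_add hts]; ring_nf
  rw [div_le_iff₀ (Real.rpow_pos_of_pos hts α)]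
  calc ‖W t - W s‖ ≤ C * (t - s) ^ (α' - α) * (t - s) ^ α := h1
  _ ≤ C * (b - a) ^ (α' - α) * (t - s) ^ α := by
      refine mul_le_mul_of_nonneg_right ?_ (Real.rpow_nonneg hts.le _)
      exact mul_le_mul_of_nonneg_left (Real.rpow_le_rpow hts.le hba (by linarith)) hC0

lemma hoSet_bddAbove {α α' : ℝ} (hα : 0 < α) (hαα' : α < α') {W : ℝ → E} {a b C : ℝ}
    (hC0 : 0 ≤ C)
    (hC : ∀ s t : ℝ, a ≤ s → s < t → t ≤ b → ‖W t - W s‖ ≤ C * (t - s) ^ α') :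
    BddAbove (hoSet α W a b) :=
  ⟨_, fun c hc => hoSet_ub hα hαα' hC0 hC c hc⟩

lemma hoSemi_nonneg {α : ℝ} {W : ℝ → E} {a b : ℝ} (hbdd : BddAbove (hoSet α W a b))
    (hab : a < b) : 0 ≤ hoSemi α W a b :=
  le_trans (div_nonneg (norm_nonneg _) (Real.rpow_nonneg (by linarith) _))
    (le_csSup hbdd ⟨a, b, le_rfl, hab, le_rfl, rfl⟩)

lemma hoSemi_mono {α : ℝ} {W : ℝ → E} {a b a' b' : ℝ} (ha : a' ≤ a) (hb : b ≤ b') (hab : a < b)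
    (hbdd : BddAbove (hoSet α W a' b')) : hoSemi α W a b ≤ hoSemi α W a' b' := by
  refine csSup_le_csSup hbdd (hoSet_nonempty hab α W) ?_
  rintro c ⟨s, t, hs, hst, ht, rfl⟩
  exact ⟨s, t, by linarith, hst, by linarith, rfl⟩

lemma hoSemi_shift (α s a b : ℝ) (W : ℝ → E) :
    hoSemi α (shiftW s W) a b = hoSemi α W (a + s) (b + s) := by
  unfold hoSemi
  congr 1
  ext c
  constructor
  · rintro ⟨u, v, hu, huv, hv, rfl⟩
    refine ⟨u + s, v + s, by linarith, by linarith, by linarith, ?_⟩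
    rw [show shiftW s W v - shiftW s W u = W (v + s) - W (u + s) from
      sub_sub_sub_cancel_right _ _ _, show v + s - (u + s) = v - u by ring]
  · rintro ⟨u, v, hu, huv, hv, rfl⟩
    refine ⟨u - s, v - s, by linarith, by linarith, by linarith, ?_⟩
    rw [show shiftW s W (v - s) - shiftW s W (u - s) = W v - W u by
      simp [shiftW, sub_add_cancel], show v - s - (u - s) = v - u by ring]

lemma hoSemi_reflect (α a b : ℝ) (W : ℝ → E) :
    hoSemi α (fun t => W (-t)) a b = hoSemi α W (-b) (-a) := by
  unfold hoSemi
  congr 1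
  ext c
  constructor
  · rintro ⟨u, v, hu, huv, hv, rfl⟩
    refine ⟨-v, -u, by linarith, by linarith, by linarith, ?_⟩
    rw [norm_sub_rev, show (-u) - (-v) = v - u by ring]
  · rintro ⟨u, v, hu, huv, hv, rfl⟩
    refine ⟨-v, -u, by linarith, by linarith, by linarith, ?_⟩
    simp only [neg_neg]
    rw [norm_sub_rev, show (-u) - (-v) = v - u by ring]



lemma cont_of_holder {α' : ℝ} (hα' : 0 < α') {W : ℝ → E}
    (hH : ∀ T : ℝ, 0 < T → ∃ C : ℝ, ∀ s ∈ Icc (-T) T, ∀ t ∈ Icc (-T) T,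
      ‖W t - W s‖ ≤ C * |t - s| ^ α') :
    Continuous W := by
  rw [continuous_iff_continuousAt]
  intro x
  obtain ⟨C, hC⟩ := hH (|x| + 1) (by positivity)
  rw [ContinuousAt, tendsto_iff_norm_sub_tendsto_zero]
  have habs : Tendsto (fun t : ℝ => |t - x|) (𝓝 x) (𝓝 0) := by
    have hc : Continuous (fun t : ℝ => |t - x|) := by fun_prop
    have := hc.tendsto x
    simpa using this
  have hrpow : ContinuousAt (fun y : ℝ => y ^ α') 0 :=
    Real.continuousAt_rpow_const 0 α' (Or.inr hα'.le)
  have hg : Tendsto (fun t : ℝ => max C 0 * |t - x| ^ α') (𝓝 x) (𝓝 0) := by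
    have h3 := (hrpow.tendsto).comp habs
    rw [Real.zero_rpow hα'.ne'] at h3
    simpa using h3.const_mul (max C 0)
  refine squeeze_zero' (Eventually.of_forall fun t => norm_nonneg _) ?_ hg
  filter_upwards [Metric.ball_mem_nhds x one_pos] with t ht
  have htx : |t - x| < 1 := by simpa [Real.dist_eq] using ht
  have hxm : x ∈ Icc (-(|x| + 1)) (|x| + 1) := by
    constructor <;> cases abs_cases x <;> linarith
  have htm : t ∈ Icc (-(|x| + 1)) (|x| + 1) := by
    have h1 : |t| ≤ |x| + 1 := by
      calc |t| = |(t - x) + x| := by ring_nf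
      _ ≤ |t - x| + |x| := abs_add_le _ _
      _ ≤ |x| + 1 := by linarith
    constructor <;> cases abs_cases t <;> linarith
  calc ‖W t - W x‖ ≤ C * |t - x| ^ α' := hC x hxm t htm
  _ ≤ max C 0 * |t - x| ^ α' :=
      mul_le_mul_of_nonneg_right (le_max_left _ _) (Real.rpow_nonneg (abs_nonneg _) _)

lemma hoSemi_extend {α α' : ℝ} (hα : 0 < α) (hαα' : α < α') {W : ℝ → E} {T τ C : ℝ}
    (hT : 0 < T) (hτ : T < τ) (hC0 : 0 ≤ C)
    (hC : ∀ s t : ℝ, 0 ≤ s → s < t → t ≤ τ → ‖W t - W s‖ ≤ C * (t - s) ^ α') :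
    hoSemi α W 0 τ ≤ hoSemi α W 0 T + C * (τ - T) ^ (α' - α) := by
  have hCT : ∀ s t : ℝ, 0 ≤ s → s < t → t ≤ T → ‖W t - W s‖ ≤ C * (t - s) ^ α' :=
    fun s t hs hst ht => hC s t hs hst (by linarith)
  have hbT : BddAbove (hoSet α W 0 T) := hoSet_bddAbove hα hαα' hC0 hCT
  have hH0 : 0 ≤ hoSemi α W 0 T := hoSemi_nonneg hbT hT
  have hrn : (0:ℝ) ≤ C * (τ - T) ^ (α' - α) :=
    mul_nonneg hC0 (Real.rpow_nonneg (by linarith) _)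
  refine csSup_le (hoSet_nonempty (by linarith) α W) ?_
  rintro c ⟨s, t, hs, hst, ht, rfl⟩
  have hts : (0:ℝ) < t - s := sub_pos.2 hst
  by_cases htT : t ≤ T
  · have h1 : ‖W t - W s‖ / (t - s) ^ α ≤ hoSemi α W 0 T :=
      le_csSup hbT ⟨s, t, hs, hst, htT, rfl⟩
    linarith
  push_neg at htT
  by_cases hsT : T ≤ s
  · -- wholly in [T, τ]
    have h1 : ‖W t - W s‖ / (t - s) ^ α ≤ C * (t - s) ^ (α' - α) := by
      rw [div_le_iff₀ (Real.rpow_pos_of_pos hts α)]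
      calc ‖W t - W s‖ ≤ C * (t - s) ^ α' := hC s t hs hst ht
      _ = C * (t - s) ^ (α' - α) * (t - s) ^ α := by
          rw [mul_assoc, ← Real.rpow_add hts]; ring_nf
    have h2 : C * (t - s) ^ (α' - α) ≤ C * (τ - T) ^ (α' - α) :=
      mul_le_mul_of_nonneg_left
        (Real.rpow_le_rpow hts.le (by linarith) (by linarith)) hC0
    linarith
  push_neg at hsT
  -- s < T < t : split
  have hTs : (0:ℝ) < T - s := sub_pos.2 hsT
  have htT' : (0:ℝ) < t - T := sub_pos.2 htT
  have hq1 : ‖W T - W s‖ ≤ hoSemi α W 0 T * (T - s) ^ α := by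
    have := le_csSup hbT (⟨s, T, hs, hsT, le_rfl, rfl⟩ :
      ‖W T - W s‖ / (T - s) ^ α ∈ hoSet α W 0 T)
    rwa [div_le_iff₀ (Real.rpow_pos_of_pos hTs α)] at this
  have hq2 : ‖W t - W T‖ ≤ C * (t - T) ^ (α' - α) * (t - s) ^ α := by
    calc ‖W t - W T‖ ≤ C * (t - T) ^ α' := hC T t hT.le htT (by linarith)
    _ = C * (t - T) ^ (α' - α) * (t - T) ^ α := by
        rw [mul_assoc, ← Real.rpow_add htT']; ring_nf
    _ ≤ C * (t - T) ^ (α' - α) * (t - s) ^ α := by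
        refine mul_le_mul_of_nonneg_left (Real.rpow_le_rpow htT'.le (by linarith) hα.le) ?_
        exact mul_nonneg hC0 (Real.rpow_nonneg htT'.le _)
  have hq3 : ‖W t - W s‖ ≤ ‖W t - W T‖ + ‖W T - W s‖ := norm_sub_le_norm_sub_add_norm_sub _ _ _
  rw [div_le_iff₀ (Real.rpow_pos_of_pos hts α)]
  have hq4 : hoSemi α W 0 T * (T - s) ^ α ≤ hoSemi α W 0 T * (t - s) ^ α :=
    mul_le_mul_of_nonneg_left (Real.rpow_le_rpow hTs.le (by linarith) hα.le) hH0
  have hq5 : C * (t - T) ^ (α' - α) ≤ C * (τ - T) ^ (α' - α) :=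
    mul_le_mul_of_nonneg_left (Real.rpow_le_rpow htT'.le (by linarith) (by linarith)) hC0
  have hq6 : C * (t - T) ^ (α' - α) * (t - s) ^ α ≤ C * (τ - T) ^ (α' - α) * (t - s) ^ α :=
    mul_le_mul_of_nonneg_right hq5 (Real.rpow_nonneg hts.le _)
  calc ‖W t - W s‖ ≤ ‖W t - W T‖ + ‖W T - W s‖ := hq3
  _ ≤ C * (t - T) ^ (α' - α) * (t - s) ^ α + hoSemi α W 0 T * (t - s) ^ α := by
      have := hq1.trans hq4; linarith [hq2]
  _ ≤ C * (τ - T) ^ (α' - α) * (t - s) ^ α + hoSemi α W 0 T * (t - s) ^ α := by linarith [hq6]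
  _ = (hoSemi α W 0 T + C * (τ - T) ^ (α' - α)) * (t - s) ^ α := by ring



lemma core {W : ℝ → E} {α α' μ : ℝ}
    (hα : 0 < α) (hαα' : α < α') (hα'1 : α' < 1) (hμ0 : 0 < μ)
    (hH : ∀ T : ℝ, 0 < T → ∃ C : ℝ, ∀ s ∈ Icc (-T) T, ∀ t ∈ Icc (-T) T,
      ‖W t - W s‖ ≤ C * |t - s| ^ α') :
    0 < fwdT α μ W ∧
    sInf {σ : ℝ | 0 < σ ∧
      μ ≤ hoSemi α W (fwdT α μ W - σ) (fwdT α μ W) + μ * σ ^ (1 - α)} = fwdT α μ W := by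
  have hα'0 : (0:ℝ) < α' := hα.trans hαα'
  have h1α : (0:ℝ) < 1 - α := by linarith
  -- Hölder constant on [-2,2]
  obtain ⟨C₀, hC₀⟩ := hH 2 two_pos
  set C : ℝ := max C₀ 0 with hCdef
  have hC0 : (0:ℝ) ≤ C := le_max_right _ _
  have hC : ∀ s t : ℝ, -2 ≤ s → s < t → t ≤ 2 → ‖W t - W s‖ ≤ C * (t - s) ^ α' := by
    intro s t hs hst ht
    have h1 := hC₀ s ⟨hs, by linarith⟩ t ⟨by linarith, ht⟩
    have h2 : |t - s| = t - s := abs_of_pos (by linarith)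
    rw [h2] at h1
    calc ‖W t - W s‖ ≤ C₀ * (t - s) ^ α' := h1
    _ ≤ C * (t - s) ^ α' :=
        mul_le_mul_of_nonneg_right (le_max_left _ _) (Real.rpow_nonneg (by linarith) _)
  have hCb : ∀ b : ℝ, b ≤ 2 → ∀ s t : ℝ, 0 ≤ s → s < t → t ≤ b →
      ‖W t - W s‖ ≤ C * (t - s) ^ α' :=
    fun b hb s t hs hst ht => hC s t (by linarith) hst (by linarith)
  have hbdd : ∀ b : ℝ, b ≤ 2 → BddAbove (hoSet α W 0 b) :=
    fun b hb => hoSet_bddAbove hα hαα' hC0 (hCb b hb)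
  set A : Set ℝ := {τ : ℝ | 0 < τ ∧ μ ≤ hoSemi α W 0 τ + μ * τ ^ (1 - α)} with hAdef
  have hTdef : fwdT α μ W = sInf A := rfl
  have h1A : (1:ℝ) ∈ A := by
    refine ⟨one_pos, ?_⟩
    have h0 : 0 ≤ hoSemi α W 0 1 := hoSemi_nonneg (hbdd 1 one_le_two) one_pos
    rw [Real.one_rpow]
    linarith
  have hAne : A.Nonempty := ⟨1, h1A⟩
  have hAbdd : BddBelow A := ⟨0, fun τ hτ => hτ.1.le⟩
  have hT1 : sInf A ≤ 1 := csInf_le hAbdd h1A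
  -- positivity of T
  have hTpos : 0 < sInf A := by
    have hf : Tendsto (fun δ : ℝ => C * δ ^ (α' - α) + μ * δ ^ (1 - α)) (𝓝 0) (𝓝 0) := by
      have h2 : ContinuousAt (fun y : ℝ => y ^ (α' - α)) 0 :=
        Real.continuousAt_rpow_const 0 _ (Or.inr (by linarith : (0:ℝ) ≤ α' - α))
      have h3 : ContinuousAt (fun y : ℝ => y ^ (1 - α)) 0 :=
        Real.continuousAt_rpow_const 0 _ (Or.inr (by linarith : (0:ℝ) ≤ 1 - α))
      have h4 : Tendsto (fun δ : ℝ => C * δ ^ (α' - α) + μ * δ ^ (1 - α)) (𝓝 0)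
          (𝓝 (C * (0:ℝ) ^ (α' - α) + μ * (0:ℝ) ^ (1 - α))) :=
        (h2.const_mul C).add (h3.const_mul μ)
      have h5 : C * (0:ℝ) ^ (α' - α) + μ * (0:ℝ) ^ (1 - α) = 0 := by
        rw [Real.zero_rpow (by linarith : α' - α ≠ 0), Real.zero_rpow h1α.ne']; ring
      rwa [h5] at h4
    have hev : ∀ᶠ δ in 𝓝 (0:ℝ), C * δ ^ (α' - α) + μ * δ ^ (1 - α) < μ :=
      hf.eventually_lt_const hμ0
    rw [Metric.eventually_nhds_iff] at hev
    obtain ⟨ε, hε, hball⟩ := hev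
    set δ : ℝ := min (ε / 2) 1 with hδdef
    have hδ0 : 0 < δ := lt_min (by linarith) one_pos
    have hδ1 : δ ≤ 1 := min_le_right _ _
    have hδε : C * δ ^ (α' - α) + μ * δ ^ (1 - α) < μ := by
      apply hball
      rw [Real.dist_eq, sub_zero, abs_of_pos hδ0]
      calc δ ≤ ε / 2 := min_le_left _ _
      _ < ε := by linarith
    have hlb : ∀ τ ∈ A, δ ≤ τ := by
      rintro τ ⟨hτ0, hτμ⟩
      by_contra h
      push_neg at h
      have hq : hoSemi α W 0 τ ≤ C * τ ^ (α' - α) := by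
        refine csSup_le (hoSet_nonempty hτ0 α W) ?_
        intro c hc
        have := hoSet_ub hα hαα' hC0 (hCb τ (by linarith)) c hc
        rwa [sub_zero] at this
      have hm1 : C * τ ^ (α' - α) ≤ C * δ ^ (α' - α) :=
        mul_le_mul_of_nonneg_left (Real.rpow_le_rpow hτ0.le h.le (by linarith)) hC0
      have hm2 : μ * τ ^ (1 - α) ≤ μ * δ ^ (1 - α) :=
        mul_le_mul_of_nonneg_left (Real.rpow_le_rpow hτ0.le h.le h1α.le) hμ0.le
      linarith
    exact lt_of_lt_of_le hδ0 (le_csInf hAne hlb)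
  set T : ℝ := sInf A with hT
  have hT2 : T ≤ 1 := hT1
  -- below T the functional is < μ
  have hΦlt : ∀ t : ℝ, 0 < t → t < T → hoSemi α W 0 t + μ * t ^ (1 - α) < μ := by
    intro t ht0 htT
    by_contra h
    push_neg at h
    exact absurd (csInf_le hAbdd ⟨ht0, h⟩) (not_le.2 htT)
  -- μ ≤ Φ(T)
  have hΦge : μ ≤ hoSemi α W 0 T + μ * T ^ (1 - α) := by
    by_contra h
    push_neg at h
    set g : ℝ → ℝ := fun ε => C * ε ^ (α' - α) + μ * ((T + ε) ^ (1 - α) - T ^ (1 - α))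
      with hgdef
    have hg : Tendsto g (𝓝 0) (𝓝 0) := by
      have h2 : ContinuousAt (fun y : ℝ => y ^ (α' - α)) 0 :=
        Real.continuousAt_rpow_const 0 _ (Or.inr (by linarith))
      have h3 : ContinuousAt (fun ε : ℝ => (T + ε) ^ (1 - α)) 0 := by
        have ha : ContinuousAt (fun ε : ℝ => T + ε) 0 := by fun_prop
        exact ha.rpow_const (Or.inl (by simpa using hTpos.ne'))
      have h4 : Tendsto g (𝓝 0)
          (𝓝 (C * (0:ℝ) ^ (α' - α) + μ * ((T + 0) ^ (1 - α) - T ^ (1 - α)))) :=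
        (h2.const_mul C).add ((h3.sub continuousAt_const).const_mul μ)
      have h5 : C * (0:ℝ) ^ (α' - α) + μ * ((T + 0) ^ (1 - α) - T ^ (1 - α)) = 0 := by
        rw [Real.zero_rpow (by linarith : α' - α ≠ 0)]; ring_nf
      rw [h5] at h4
      exact h4
    have hev : ∀ᶠ ε in 𝓝 (0:ℝ), g ε < μ - (hoSemi α W 0 T + μ * T ^ (1 - α)) :=
      hg.eventually_lt_const (by linarith)
    rw [Metric.eventually_nhds_iff] at hev
    obtain ⟨r, hr, hball⟩ := hev
    set ε : ℝ := min (r / 2) 1 with hεdef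
    have hε0 : 0 < ε := lt_min (by linarith) one_pos
    have hε1 : ε ≤ 1 := min_le_right _ _
    have hgε : g ε < μ - (hoSemi α W 0 T + μ * T ^ (1 - α)) := by
      apply hball
      rw [Real.dist_eq, sub_zero, abs_of_pos hε0]
      calc ε ≤ r / 2 := min_le_left _ _
      _ < r := by linarith
    -- μ ≤ Φ(T+ε)
    have hkey : μ ≤ hoSemi α W 0 (T + ε) + μ * (T + ε) ^ (1 - α) := by
      obtain ⟨a, haA, haε⟩ := exists_lt_of_csInf_lt hAne (by linarith : sInf A < T + ε)
      have hm1 : hoSemi α W 0 a ≤ hoSemi α W 0 (T + ε) :=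
        hoSemi_mono le_rfl haε.le haA.1 (hbdd (T + ε) (by linarith))
      have hm2 : μ * a ^ (1 - α) ≤ μ * (T + ε) ^ (1 - α) :=
        mul_le_mul_of_nonneg_left
          (Real.rpow_le_rpow haA.1.le haε.le h1α.le) hμ0.le
      have := haA.2
      linarith
    have hext : hoSemi α W 0 (T + ε) ≤ hoSemi α W 0 T + C * ε ^ (α' - α) := by
      have := hoSemi_extend hα hαα' hTpos (by linarith : T < T + ε) hC0
        (hCb (T + ε) (by linarith))
      simpa using this
    have : μ ≤ hoSemi α W 0 T + μ * T ^ (1 - α) + g ε := by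
      have hsplit : μ * (T + ε) ^ (1 - α) =
          μ * T ^ (1 - α) + μ * ((T + ε) ^ (1 - α) - T ^ (1 - α)) := by ring
      rw [hgdef]
      simp only []
      linarith [hkey, hext]
    linarith
  -- continuity of W
  have hWc : Continuous W := cont_of_holder hα'0 hH
  -- Φ(T) ≤ μ : hoSemi ≤ μ - μ T^{1-α}
  have hΦle : hoSemi α W 0 T ≤ μ - μ * T ^ (1 - α) := by
    refine csSup_le (hoSet_nonempty hTpos α W) ?_
    rintro c ⟨s, t, hs, hst, ht, rfl⟩
    have ht0 : 0 < t := lt_of_le_of_lt hs hst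
    have htendK : Tendsto (fun u : ℝ => μ - μ * u ^ (1 - α)) (𝓝[<] T)
        (𝓝 (μ - μ * T ^ (1 - α))) := by
      have hb : ContinuousAt (fun u : ℝ => μ - μ * u ^ (1 - α)) T := by
        have h0 : ContinuousAt (fun u : ℝ => u ^ (1 - α)) T :=
          continuousAt_id.rpow_const (Or.inl hTpos.ne')
        exact continuousAt_const.sub (h0.const_mul μ)
      exact hb.tendsto.mono_left nhdsWithin_le_nhds
    have hbound : ∀ u : ℝ, 0 < u → u < T → hoSemi α W 0 u ≤ μ - μ * u ^ (1 - α) := by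
      intro u hu0 huT
      have := hΦlt u hu0 huT
      linarith
    rcases eq_or_lt_of_le ht with rfl | htT
    · -- t = T
      have hq : Tendsto (fun u : ℝ => ‖W u - W s‖ / (u - s) ^ α) (𝓝[<] T)
          (𝓝 (‖W T - W s‖ / (T - s) ^ α)) := by
        have hnum : ContinuousAt (fun u : ℝ => ‖W u - W s‖) T := by
          exact ((hWc.continuousAt).sub continuousAt_const).norm
        have hden : ContinuousAt (fun u : ℝ => (u - s) ^ α) T := by
          have ha : ContinuousAt (fun u : ℝ => u - s) T := by fun_prop
          exact ha.rpow_const (Or.inl (sub_pos.2 hst).ne')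
        have hca := hnum.div hden (Real.rpow_pos_of_pos (sub_pos.2 hst) α).ne'
        exact hca.tendsto.mono_left nhdsWithin_le_nhds
      refine le_of_tendsto_of_tendsto hq htendK ?_
      filter_upwards [Ioo_mem_nhdsLT_of_mem (⟨hst, le_rfl⟩ : T ∈ Ioc s T)] with u hu
      have hu0 : 0 < u := lt_of_le_of_lt hs hu.1
      have h1 : ‖W u - W s‖ / (u - s) ^ α ≤ hoSemi α W 0 u :=
        le_csSup (hbdd u (by linarith [hu.2])) ⟨s, u, hs, hu.1, le_rfl, rfl⟩
      exact h1.trans (hbound u hu0 hu.2)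
    · -- t < T
      refine ge_of_tendsto htendK ?_
      filter_upwards [Ioo_mem_nhdsLT_of_mem (⟨htT, le_rfl⟩ : T ∈ Ioc t T)] with u hu
      have h1 : ‖W t - W s‖ / (t - s) ^ α ≤ hoSemi α W 0 u :=
        le_csSup (hbdd u (by linarith [hu.2])) ⟨s, t, hs, hst, hu.1.le, rfl⟩
      exact h1.trans (hbound u (ht0.trans hu.1) hu.2)
  -- conclude
  refine ⟨hTpos, ?_⟩
  set B : Set ℝ := {σ : ℝ | 0 < σ ∧
      μ ≤ hoSemi α W (T - σ) T + μ * σ ^ (1 - α)} with hBdef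
  have hTB : T ∈ B := by
    refine ⟨hTpos, ?_⟩
    rw [sub_self]
    exact hΦge
  have hBlb : ∀ σ ∈ B, T ≤ σ := by
    rintro σ ⟨hσ0, hσμ⟩
    by_contra h
    push_neg at h
    have h1 : hoSemi α W (T - σ) T ≤ hoSemi α W 0 T :=
      hoSemi_mono (by linarith) le_rfl (by linarith) (hbdd T (by linarith))
    have h2 : μ * σ ^ (1 - α) < μ * T ^ (1 - α) :=
      mul_lt_mul_of_pos_left (Real.rpow_lt_rpow hσ0.le h h1α) hμ0
    linarith
  exact le_antisymm (csInf_le ⟨0, fun σ hσ => hσ.1.le⟩ hTB) (le_csInf ⟨T, hTB⟩ hBlb)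

end Stmt2Aux

lemma sSup_neg_set (s : Set ℝ) : sSup (-s) = -sInf s := by
  rw [Real.sInf_def, neg_neg]

open Stmt2Aux

/-- the forward and backward stopping times are intertwined by the shift:
`T(W) = −T̂(θ_{T(W)} W)` and `T̂(W) = −T(θ_{T̂(W)} W)`. -/
theorem stmt2 {d : ℕ} (W : ℝ → (Fin d → ℝ)) (α α' μ : ℝ)
    (hα : 0 < α) (hαα' : α < α') (hα'1 : α' < 1) (hμ0 : 0 < μ) (hμ1 : μ < 1)
    (hHolder : ∀ T : ℝ, 0 < T → ∃ C : ℝ, ∀ s ∈ Icc (-T) T, ∀ t ∈ Icc (-T) T,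
      ‖W t - W s‖ ≤ C * |t - s| ^ α') :
    fwdT α μ W = -bwdT α μ (shiftW (fwdT α μ W) W) ∧
    bwdT α μ W = -fwdT α μ (shiftW (bwdT α μ W) W) := by
  constructor
  · -- Part 1
    obtain ⟨hTpos, hTB⟩ := core hα hαα' hα'1 hμ0 hHolder
    set T : ℝ := fwdT α μ W with hT
    have hset : {τ : ℝ | τ < 0 ∧ μ ≤ hoSemi α (shiftW T W) τ 0 + μ * |τ| ^ (1 - α)} =
        -{σ : ℝ | 0 < σ ∧ μ ≤ hoSemi α W (T - σ) T + μ * σ ^ (1 - α)} := by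
      ext τ
      simp only [Set.mem_neg, Set.mem_setOf_eq]
      constructor
      · rintro ⟨h1, h2⟩
        refine ⟨by linarith, ?_⟩
        rw [hoSemi_shift, abs_of_neg h1, zero_add] at h2
        rw [show T - -τ = τ + T by ring]
        exact h2
      · rintro ⟨h1, h2⟩
        refine ⟨by linarith, ?_⟩
        rw [hoSemi_shift, abs_of_neg (by linarith : τ < 0),
          show τ + T = T - -τ by ring, show (0:ℝ) + T = T by ring]
        exact h2
    have hbw : bwdT α μ (shiftW T W) = -T := by
      unfold bwdT
      rw [hset, sSup_neg_set, hTB]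
    rw [hbw, neg_neg]
  · -- Part 2
    set U : ℝ → (Fin d → ℝ) := fun t => W (-t) with hU
    have hHU : ∀ M : ℝ, 0 < M → ∃ C : ℝ, ∀ s ∈ Icc (-M) M, ∀ t ∈ Icc (-M) M,
        ‖U t - U s‖ ≤ C * |t - s| ^ α' := by
      intro M hM
      obtain ⟨C, hC⟩ := hHolder M hM
      refine ⟨C, fun s hs t ht => ?_⟩
      have h1 := hC (-s) ⟨by linarith [hs.2], by linarith [hs.1]⟩
        (-t) ⟨by linarith [ht.2], by linarith [ht.1]⟩
      have h2 : |(-t) - (-s)| = |t - s| := by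
        rw [show (-t) - (-s) = -(t - s) by ring, abs_neg]
      rw [h2] at h1
      exact h1
    obtain ⟨hSpos, hSB⟩ := core hα hαα' hα'1 hμ0 hHU
    set S : ℝ := fwdT α μ U with hS
    have hrefl : ∀ a b : ℝ, hoSemi α U a b = hoSemi α W (-b) (-a) := fun a b =>
      hoSemi_reflect α a b W
    have hb : bwdT α μ W = -S := by
      have hset : {τ : ℝ | τ < 0 ∧ μ ≤ hoSemi α W τ 0 + μ * |τ| ^ (1 - α)} =
          -{τ : ℝ | 0 < τ ∧ μ ≤ hoSemi α U 0 τ + μ * τ ^ (1 - α)} := by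
        ext τ
        simp only [Set.mem_neg, Set.mem_setOf_eq]
        rw [hrefl 0 (-τ), neg_neg, neg_zero]
        constructor
        · rintro ⟨h1, h2⟩
          exact ⟨by linarith, by rwa [abs_of_neg h1] at h2⟩
        · rintro ⟨h1, h2⟩
          exact ⟨by linarith, by rwa [abs_of_neg (by linarith : τ < 0)]⟩
      unfold bwdT
      rw [hset, sSup_neg_set]
      rfl
    have hfw : fwdT α μ (shiftW (-S) W) = S := by
      have hset2 : {τ : ℝ | 0 < τ ∧ μ ≤ hoSemi α (shiftW (-S) W) 0 τ + μ * τ ^ (1 - α)} =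
          {σ : ℝ | 0 < σ ∧ μ ≤ hoSemi α U (S - σ) S + μ * σ ^ (1 - α)} := by
        ext τ
        simp only [Set.mem_setOf_eq]
        rw [hoSemi_shift, hrefl (S - τ) S,
          show -(S - τ) = τ + -S by ring, show (0:ℝ) + -S = -S by ring]
      unfold fwdT
      rw [hset2]
      exact hSB
    rw [hb, hfw]
end

section
/- With stopping times as above (T(W)∈(0,1], T̂(W)∈[−1,0), defined by the exact exit relation ⟦W⟧_{α,[0,T(W)]}+μT(W)^{1-α}=μ and its backward analogue), for any t₁ ≤ t₂ one has t₁ + T̂(θ_{t₁} W) ≤ t₂ + T̂(θ_{t₂} W); that is, the map t ↦ t + T̂(θ_t W) is monotone nondecreasing. -/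
open Set Filter

/-- with the stopping times lying in `(0,1]` resp. `[−1,0)` and defined by the
exact exit relation, the map `t ↦ t + T̂(θ_t W)` is monotone nondecreasing. -/
theorem stmt3 {d : ℕ} (W : ℝ → (Fin d → ℝ)) (α α' μ : ℝ)
    (hα : 0 < α) (hαα' : α < α') (hα'1 : α' < 1) (hμ0 : 0 < μ) (hμ1 : μ < 1)
    (hHolder : ∀ T : ℝ, 0 < T → ∃ C : ℝ, ∀ s ∈ Icc (-T) T, ∀ t ∈ Icc (-T) T,
      ‖W t - W s‖ ≤ C * |t - s| ^ α')
    (hfwd : ∀ s : ℝ, fwdT α μ (shiftW s W) ∈ Ioc (0:ℝ) 1 ∧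
      hoSemi α (shiftW s W) 0 (fwdT α μ (shiftW s W))
        + μ * (fwdT α μ (shiftW s W)) ^ (1 - α) = μ)
    (hbwd : ∀ s : ℝ, bwdT α μ (shiftW s W) ∈ Ico (-1:ℝ) 0 ∧
      hoSemi α (shiftW s W) (bwdT α μ (shiftW s W)) 0
        + μ * |bwdT α μ (shiftW s W)| ^ (1 - α) = μ) :
    ∀ t₁ t₂ : ℝ, t₁ ≤ t₂ →
      t₁ + bwdT α μ (shiftW t₁ W) ≤ t₂ + bwdT α μ (shiftW t₂ W) := by
  intro t₁ t₂ ht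
  by_contra hcon
  push_neg at hcon
  set τ₁ := bwdT α μ (shiftW t₁ W) with hτ₁def
  set τ₂ := bwdT α μ (shiftW t₂ W) with hτ₂def
  obtain ⟨⟨hτ₁lb, hτ₁neg⟩, hexit₁⟩ := hbwd t₁
  obtain ⟨⟨hτ₂lb, hτ₂neg⟩, _⟩ := hbwd t₂
  set σ := t₁ + τ₁ - t₂ with hσdef
  have hστ₂ : τ₂ < σ := by simp only [hσdef]; linarith
  have hστ₁ : σ ≤ τ₁ := by simp only [hσdef]; linarith
  have hσneg : σ < 0 := lt_of_le_of_lt hστ₁ hτ₁neg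
  have hσlb : -1 < σ := lt_of_le_of_lt hτ₂lb hστ₂
  have h1α : (0:ℝ) < 1 - α := by linarith
  -- The defining sets for the Hölder seminorms
  set S₁ := {c : ℝ | ∃ s t : ℝ, τ₁ ≤ s ∧ s < t ∧ t ≤ 0 ∧
      c = ‖shiftW t₁ W t - shiftW t₁ W s‖ / (t - s) ^ α} with hS₁def
  set S₂ := {c : ℝ | ∃ s t : ℝ, σ ≤ s ∧ s < t ∧ t ≤ 0 ∧
      c = ‖shiftW t₂ W t - shiftW t₂ W s‖ / (t - s) ^ α} with hS₂def
  have hsub : S₁ ⊆ S₂ := by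
    rintro c ⟨s, t, hs, hst, ht0, hc⟩
    refine ⟨s + t₁ - t₂, t + t₁ - t₂, by simp only [hσdef]; linarith, by linarith, by linarith, ?_⟩
    have hnorm : shiftW t₂ W (t + t₁ - t₂) - shiftW t₂ W (s + t₁ - t₂)
        = shiftW t₁ W t - shiftW t₁ W s := by
      simp only [shiftW]
      have h1 : t + t₁ - t₂ + t₂ = t + t₁ := by ring
      have h2 : s + t₁ - t₂ + t₂ = s + t₁ := by ring
      rw [h1, h2]
      abel
    rw [hnorm, hc]
    congr 2
    ring
  have hS₁ne : S₁.Nonempty :=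
    ⟨‖shiftW t₁ W 0 - shiftW t₁ W τ₁‖ / (0 - τ₁) ^ α, τ₁, 0, le_refl _, hτ₁neg, le_refl _, rfl⟩
  -- S₂ is bounded above using the Hölder assumption
  have hS₂bdd : BddAbove S₂ := by
    set T : ℝ := |t₂| + 2 with hTdef
    have hT0 : 0 < T := by positivity
    obtain ⟨C, hC⟩ := hHolder T hT0
    refine ⟨max C 0, ?_⟩
    rintro c ⟨s, t, hs, hst, ht0, hc⟩
    have hs1 : -1 < s := lt_of_lt_of_le hσlb hs
    have hts0 : 0 < t - s := by linarith
    have hts1 : t - s ≤ 1 := by linarith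
    have hmem : ∀ u : ℝ, -1 < u → u ≤ 0 → u + t₂ ∈ Icc (-T) T := by
      intro u hu1 hu0
      constructor
      · have : -|t₂| ≤ t₂ := neg_abs_le t₂
        simp only [hTdef]; linarith
      · have : t₂ ≤ |t₂| := le_abs_self t₂
        simp only [hTdef]; linarith
    have hnorm : ‖shiftW t₂ W t - shiftW t₂ W s‖ ≤ C * (t - s) ^ α' := by
      have := hC (s + t₂) (hmem s hs1 (by linarith)) (t + t₂) (hmem t (by linarith) ht0)
      have habs : |t + t₂ - (s + t₂)| = t - s := by
        rw [abs_of_pos (by linarith)]; ring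
      rw [habs] at this
      have heq : shiftW t₂ W t - shiftW t₂ W s = W (t + t₂) - W (s + t₂) := by
        simp only [shiftW]; abel
      rw [heq]; exact this
    have hCnn : 0 ≤ C := by
      have h2 := hnorm
      nlinarith [norm_nonneg (shiftW t₂ W t - shiftW t₂ W s),
        Real.rpow_pos_of_pos hts0 α']
    have hpowα : (0:ℝ) < (t - s) ^ α := Real.rpow_pos_of_pos hts0 α
    rw [hc]
    rw [div_le_iff₀ hpowα]
    calc ‖shiftW t₂ W t - shiftW t₂ W s‖ ≤ C * (t - s) ^ α' := hnorm
      _ = C * ((t - s) ^ (α' - α) * (t - s) ^ α) := by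
          rw [← Real.rpow_add hts0]; ring_nf
      _ ≤ C * (1 * (t - s) ^ α) := by
          apply mul_le_mul_of_nonneg_left _ hCnn
          apply mul_le_mul_of_nonneg_right _ (le_of_lt hpowα)
          exact Real.rpow_le_one (le_of_lt hts0) hts1 (by linarith)
      _ ≤ max C 0 * (t - s) ^ α := by
          rw [one_mul]
          exact mul_le_mul_of_nonneg_right (le_max_left C 0) (le_of_lt hpowα)
  -- seminorm comparison
  have hsemi : hoSemi α (shiftW t₁ W) τ₁ 0 ≤ hoSemi α (shiftW t₂ W) σ 0 :=
    csSup_le_csSup hS₂bdd hS₁ne hsub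
  -- |τ₁| ≤ |σ|
  have habsle : |τ₁| ^ (1 - α) ≤ |σ| ^ (1 - α) := by
    apply Real.rpow_le_rpow (abs_nonneg _) _ (le_of_lt h1α)
    rw [abs_of_neg hτ₁neg, abs_of_neg hσneg]
    linarith
  -- σ belongs to the defining set of bwdT (shiftW t₂ W)
  have hσmem : σ ∈ {τ : ℝ | τ < 0 ∧ μ ≤ hoSemi α (shiftW t₂ W) τ 0 + μ * |τ| ^ (1 - α)} := by
    refine ⟨hσneg, ?_⟩
    have hmul := mul_le_mul_of_nonneg_left habsle (le_of_lt hμ0)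
    calc μ = hoSemi α (shiftW t₁ W) τ₁ 0 + μ * |τ₁| ^ (1 - α) := hexit₁.symm
      _ ≤ hoSemi α (shiftW t₂ W) σ 0 + μ * |σ| ^ (1 - α) := by linarith
  have hbdd : BddAbove {τ : ℝ | τ < 0 ∧ μ ≤ hoSemi α (shiftW t₂ W) τ 0 + μ * |τ| ^ (1 - α)} :=
    ⟨0, fun x hx => le_of_lt hx.1⟩
  have : σ ≤ τ₂ := le_csSup hbdd hσmem
  linarith
end

section
/- Truncation stability of rough path norms: let (W,𝕎) be an α'-Hölder rough path on [0,T] and for τ₀ ∈ (0,T) define the truncated rough path W^{τ₀}_s = W_s for s ≤ τ₀ and W^{τ₀}_s = W_{τ₀} for s > τ₀, with 𝕎^{τ₀}_{s,t} = 𝕎_{s,t} for t ≤ τ₀, 𝕎^{τ₀}_{s,t} = 𝕎_{s,τ₀} for s ≤ τ₀ ≤ t, and 𝕎^{τ₀}_{s,t} = 0 for τ₀ ≤ s. Then for α < α' and τ ≥ τ₀: | ‖(W,𝕎)‖_{α,[0,τ]} − ‖(W,𝕎)‖_{α,[0,τ₀]} | ≤ (τ−τ₀)^{2(α'−α)}⟦𝕎⟧_{2α',[τ₀,τ]}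 + (⟦W⟧_{α,[0,τ₀]}+1)⟦W⟧_{α',[τ₀,τ]}(τ−τ₀)^{α'−α}. In particular τ ↦ ‖(W,𝕎)‖_{α,[0,τ]} is continuous. -/
open Set

/-- The `2α`-Hölder seminorm of a second-order process over `[a,b]`. -/
noncomputable def hoSemi2 {E : Type*} [NormedAddCommGroup E] (α : ℝ) (V : ℝ → ℝ → E) (a b : ℝ) : ℝ :=
  sSup {c : ℝ | ∃ s t : ℝ, a ≤ s ∧ s < t ∧ t ≤ b ∧ c = ‖V s t‖ / (t - s) ^ (2 * α)}

namespace Stmt7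

variable {E : Type*} [NormedAddCommGroup E]

lemma hoSemi_nonneg (α : ℝ) (W : ℝ → E) (a b : ℝ) : 0 ≤ hoSemi α W a b := by
  apply Real.sSup_nonneg
  rintro c ⟨s, t, _, hst, _, rfl⟩
  exact div_nonneg (norm_nonneg _) (Real.rpow_nonneg (by linarith) _)

lemma hoSemi2_nonneg (α : ℝ) (V : ℝ → ℝ → E) (a b : ℝ) : 0 ≤ hoSemi2 α V a b := by
  apply Real.sSup_nonneg
  rintro c ⟨s, t, _, hst, _, rfl⟩
  exact div_nonneg (norm_nonneg _) (Real.rpow_nonneg (by linarith) _)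

lemma le_hoSemi {α : ℝ} {W : ℝ → E} {a b s t : ℝ}
    (h : BddAbove {c : ℝ | ∃ s t : ℝ, a ≤ s ∧ s < t ∧ t ≤ b ∧ c = ‖W t - W s‖ / (t - s) ^ α})
    (hs : a ≤ s) (hst : s < t) (htb : t ≤ b) :
    ‖W t - W s‖ / (t - s) ^ α ≤ hoSemi α W a b :=
  le_csSup h ⟨s, t, hs, hst, htb, rfl⟩

lemma le_hoSemi2 {α : ℝ} {V : ℝ → ℝ → E} {a b s t : ℝ}
    (h : BddAbove {c : ℝ | ∃ s t : ℝ, a ≤ s ∧ s < t ∧ t ≤ b ∧ c = ‖V s t‖ / (t - s) ^ (2 * α)})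
    (hs : a ≤ s) (hst : s < t) (htb : t ≤ b) :
    ‖V s t‖ / (t - s) ^ (2 * α) ≤ hoSemi2 α V a b :=
  le_csSup h ⟨s, t, hs, hst, htb, rfl⟩

lemma hoSemi_le {α : ℝ} {W : ℝ → E} {a b M : ℝ} (hM : 0 ≤ M)
    (h : ∀ s t : ℝ, a ≤ s → s < t → t ≤ b → ‖W t - W s‖ / (t - s) ^ α ≤ M) :
    hoSemi α W a b ≤ M :=
  Real.sSup_le (by rintro c ⟨s, t, hs, hst, htb, rfl⟩; exact h s t hs hst htb) hM

lemma hoSemi2_le {α : ℝ} {V : ℝ → ℝ → E} {a b M : ℝ} (hM : 0 ≤ M)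
    (h : ∀ s t : ℝ, a ≤ s → s < t → t ≤ b → ‖V s t‖ / (t - s) ^ (2 * α) ≤ M) :
    hoSemi2 α V a b ≤ M :=
  Real.sSup_le (by rintro c ⟨s, t, hs, hst, htb, rfl⟩; exact h s t hs hst htb) hM

lemma el_bound {α α' C a b : ℝ} {W : ℝ → E} (hα : 0 < α) (hαα' : α ≤ α') (hC0 : 0 ≤ C)
    (hC : ∀ s t : ℝ, a ≤ s → s ≤ t → t ≤ b → ‖W t - W s‖ ≤ C * (t - s) ^ α')
    {s t : ℝ} (hs : a ≤ s) (hst : s < t) (htb : t ≤ b) :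
    ‖W t - W s‖ / (t - s) ^ α ≤ C * (1 + (b - a)) ^ (α' - α) := by
  have h0 : (0:ℝ) < t - s := by linarith
  rw [div_le_iff₀ (Real.rpow_pos_of_pos h0 α)]
  calc ‖W t - W s‖ ≤ C * (t - s) ^ α' := hC s t hs hst.le htb
    _ = C * ((t - s) ^ (α' - α) * (t - s) ^ α) := by
        rw [← Real.rpow_add h0, sub_add_cancel]
    _ ≤ C * ((1 + (b - a)) ^ (α' - α) * (t - s) ^ α) := by
        have h1 : (t - s) ^ (α' - α) ≤ (1 + (b - a)) ^ (α' - α) :=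
          Real.rpow_le_rpow h0.le (by linarith) (by linarith)
        have h2 : (0:ℝ) ≤ (t - s) ^ α := Real.rpow_nonneg h0.le _
        nlinarith [mul_nonneg hC0 h2]
    _ = C * (1 + (b - a)) ^ (α' - α) * (t - s) ^ α := by ring

lemma bdd1 {α α' C a b : ℝ} {W : ℝ → E} (hα : 0 < α) (hαα' : α ≤ α') (hC0 : 0 ≤ C)
    (hC : ∀ s t : ℝ, a ≤ s → s ≤ t → t ≤ b → ‖W t - W s‖ ≤ C * (t - s) ^ α') :
    BddAbove {c : ℝ | ∃ s t : ℝ, a ≤ s ∧ s < t ∧ t ≤ b ∧ c = ‖W t - W s‖ / (t - s) ^ α} := by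
  refine ⟨C * (1 + (b - a)) ^ (α' - α), ?_⟩
  rintro c ⟨s, t, hs, hst, htb, rfl⟩
  exact el_bound hα hαα' hC0 hC hs hst htb

lemma el2_bound {α α' C a b : ℝ} {V : ℝ → ℝ → E} (hα : 0 < α) (hαα' : α ≤ α') (hC0 : 0 ≤ C)
    (hC : ∀ s t : ℝ, a ≤ s → s ≤ t → t ≤ b → ‖V s t‖ ≤ C * (t - s) ^ (2 * α'))
    {s t : ℝ} (hs : a ≤ s) (hst : s < t) (htb : t ≤ b) :
    ‖V s t‖ / (t - s) ^ (2 * α) ≤ C * (1 + (b - a)) ^ (2 * (α' - α)) := by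
  have h0 : (0:ℝ) < t - s := by linarith
  rw [div_le_iff₀ (Real.rpow_pos_of_pos h0 _)]
  calc ‖V s t‖ ≤ C * (t - s) ^ (2 * α') := hC s t hs hst.le htb
    _ = C * ((t - s) ^ (2 * (α' - α)) * (t - s) ^ (2 * α)) := by
        rw [← Real.rpow_add h0]; ring_nf
    _ ≤ C * ((1 + (b - a)) ^ (2 * (α' - α)) * (t - s) ^ (2 * α)) := by
        have h1 : (t - s) ^ (2 * (α' - α)) ≤ (1 + (b - a)) ^ (2 * (α' - α)) :=
          Real.rpow_le_rpow h0.le (by linarith) (by linarith)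
        have h2 : (0:ℝ) ≤ (t - s) ^ (2 * α) := Real.rpow_nonneg h0.le _
        nlinarith [mul_nonneg hC0 h2]
    _ = C * (1 + (b - a)) ^ (2 * (α' - α)) * (t - s) ^ (2 * α) := by ring

lemma bdd2 {α α' C a b : ℝ} {V : ℝ → ℝ → E} (hα : 0 < α) (hαα' : α ≤ α') (hC0 : 0 ≤ C)
    (hC : ∀ s t : ℝ, a ≤ s → s ≤ t → t ≤ b → ‖V s t‖ ≤ C * (t - s) ^ (2 * α')) :
    BddAbove {c : ℝ | ∃ s t : ℝ, a ≤ s ∧ s < t ∧ t ≤ b ∧ c = ‖V s t‖ / (t - s) ^ (2 * α)} := by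
  refine ⟨C * (1 + (b - a)) ^ (2 * (α' - α)), ?_⟩
  rintro c ⟨s, t, hs, hst, htb, rfl⟩
  exact el2_bound hα hαα' hC0 hC hs hst htb

lemma outer_norm_le {d : ℕ} (a b : Fin d → ℝ) :
    ‖(fun k l => a k * b l : Fin d → Fin d → ℝ)‖ ≤ ‖a‖ * ‖b‖ := by
  rw [pi_norm_le_iff_of_nonneg (by positivity)]
  intro k
  rw [pi_norm_le_iff_of_nonneg (by positivity)]
  intro l
  calc ‖a k * b l‖ = ‖a k‖ * ‖b l‖ := norm_mul _ _
    _ ≤ ‖a‖ * ‖b‖ :=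
      mul_le_mul (norm_le_pi_norm a k) (norm_le_pi_norm b l) (norm_nonneg _) (norm_nonneg _)

lemma stepW {α α' ρ σ : ℝ} {W : ℝ → E}
    (hα : 0 < α) (hαα' : α < α') (hρ : 0 ≤ ρ) (hρσ : ρ ≤ σ)
    (hb0 : BddAbove {c : ℝ | ∃ s t : ℝ, 0 ≤ s ∧ s < t ∧ t ≤ ρ ∧ c = ‖W t - W s‖ / (t - s) ^ α})
    (hb1 : BddAbove {c : ℝ | ∃ s t : ℝ, ρ ≤ s ∧ s < t ∧ t ≤ σ ∧ c = ‖W t - W s‖ / (t - s) ^ α'}) :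
    hoSemi α W 0 σ ≤ hoSemi α W 0 ρ + hoSemi α' W ρ σ * (σ - ρ) ^ (α' - α) := by
  have hA : 0 ≤ hoSemi α W 0 ρ := hoSemi_nonneg _ _ _ _
  have hH : 0 ≤ hoSemi α' W ρ σ := hoSemi_nonneg _ _ _ _
  have hP : 0 ≤ (σ - ρ) ^ (α' - α) := Real.rpow_nonneg (by linarith) _
  apply hoSemi_le (by nlinarith)
  intro s t hs hst htσ
  have ht0 : (0:ℝ) < t - s := by linarith
  rcases le_or_gt t ρ with h1 | h1
  · have := le_hoSemi hb0 hs hst h1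
    nlinarith
  · rcases le_or_gt ρ s with h2 | h2
    · -- ρ ≤ s < t ≤ σ
      have key : ‖W t - W s‖ ≤ hoSemi α' W ρ σ * (t - s) ^ α' :=
        (div_le_iff₀ (Real.rpow_pos_of_pos ht0 _)).mp (le_hoSemi hb1 h2 hst htσ)
      rw [div_le_iff₀ (Real.rpow_pos_of_pos ht0 _)]
      have b1 : (t - s) ^ (α' - α) ≤ (σ - ρ) ^ (α' - α) :=
        Real.rpow_le_rpow ht0.le (by linarith) (by linarith)
      have b2 : (t - s) ^ α' = (t - s) ^ (α' - α) * (t - s) ^ α := by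
        rw [← Real.rpow_add ht0, sub_add_cancel]
      have h3 : (0:ℝ) ≤ (t - s) ^ α := Real.rpow_nonneg ht0.le _
      calc ‖W t - W s‖ ≤ hoSemi α' W ρ σ * (t - s) ^ α' := key
        _ ≤ (hoSemi α W 0 ρ + hoSemi α' W ρ σ * (σ - ρ) ^ (α' - α)) * (t - s) ^ α := by
            rw [b2]; nlinarith [mul_nonneg hH h3]
    · -- s < ρ < t
      have h3 : (0:ℝ) < ρ - s := by linarith
      have h4 : (0:ℝ) < t - ρ := by linarith
      have e1 : ‖W ρ - W s‖ ≤ hoSemi α W 0 ρ * (ρ - s) ^ α :=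
        (div_le_iff₀ (Real.rpow_pos_of_pos h3 _)).mp (le_hoSemi hb0 hs h2 le_rfl)
      have e2 : ‖W t - W ρ‖ ≤ hoSemi α' W ρ σ * (t - ρ) ^ α' :=
        (div_le_iff₀ (Real.rpow_pos_of_pos h4 _)).mp (le_hoSemi hb1 le_rfl h1 htσ)
      rw [div_le_iff₀ (Real.rpow_pos_of_pos ht0 _)]
      have tri : ‖W t - W s‖ ≤ ‖W ρ - W s‖ + ‖W t - W ρ‖ := by
        calc ‖W t - W s‖ = ‖(W ρ - W s) + (W t - W ρ)‖ := by
              rw [show W t - W s = (W ρ - W s) + (W t - W ρ) by abel]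
          _ ≤ ‖W ρ - W s‖ + ‖W t - W ρ‖ := norm_add_le _ _
      have b1 : (ρ - s) ^ α ≤ (t - s) ^ α := Real.rpow_le_rpow h3.le (by linarith) hα.le
      have b2 : (t - ρ) ^ α' = (t - ρ) ^ (α' - α) * (t - ρ) ^ α := by
        rw [← Real.rpow_add h4, sub_add_cancel]
      have b3 : (t - ρ) ^ (α' - α) ≤ (σ - ρ) ^ (α' - α) :=
        Real.rpow_le_rpow h4.le (by linarith) (by linarith)
      have b4 : (t - ρ) ^ α ≤ (t - s) ^ α := Real.rpow_le_rpow h4.le (by linarith) hα.le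
      have n1 : (0:ℝ) ≤ (t - s) ^ α := Real.rpow_nonneg ht0.le _
      have n2 : (0:ℝ) ≤ (t - ρ) ^ α := Real.rpow_nonneg h4.le _
      have n3 : (0:ℝ) ≤ (t - ρ) ^ (α' - α) := Real.rpow_nonneg h4.le _
      calc ‖W t - W s‖ ≤ hoSemi α W 0 ρ * (ρ - s) ^ α + hoSemi α' W ρ σ * (t - ρ) ^ α' := by
            linarith
        _ ≤ (hoSemi α W 0 ρ + hoSemi α' W ρ σ * (σ - ρ) ^ (α' - α)) * (t - s) ^ α := by
            rw [b2]
            have c1 : (t - ρ) ^ (α' - α) * (t - ρ) ^ α ≤ (σ - ρ) ^ (α' - α) * (t - s) ^ α :=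
              mul_le_mul b3 b4 n2 hP
            nlinarith [mul_le_mul_of_nonneg_left c1 hH, mul_le_mul_of_nonneg_left b1 hA]

lemma stepV {d : ℕ} {α α' ρ σ : ℝ} {W : ℝ → Fin d → ℝ} {V : ℝ → ℝ → Fin d → Fin d → ℝ}
    (hα : 0 < α) (hαα' : α < α') (hρ : 0 ≤ ρ) (hρσ : ρ ≤ σ)
    (hChen : ∀ s t : ℝ, 0 ≤ s → s < ρ → ρ < t → t ≤ σ →
      V s t - V s ρ - V ρ t = fun k l => (W ρ k - W s k) * (W t l - W ρ l))
    (hbW0 : BddAbove {c : ℝ | ∃ s t : ℝ, 0 ≤ s ∧ s < t ∧ t ≤ ρ ∧ c = ‖W t - W s‖ / (t - s) ^ α})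
    (hbW1 : BddAbove {c : ℝ | ∃ s t : ℝ, ρ ≤ s ∧ s < t ∧ t ≤ σ ∧ c = ‖W t - W s‖ / (t - s) ^ α'})
    (hbV0 : BddAbove {c : ℝ | ∃ s t : ℝ, 0 ≤ s ∧ s < t ∧ t ≤ ρ ∧ c = ‖V s t‖ / (t - s) ^ (2 * α)})
    (hbV1 : BddAbove {c : ℝ | ∃ s t : ℝ, ρ ≤ s ∧ s < t ∧ t ≤ σ ∧ c = ‖V s t‖ / (t - s) ^ (2 * α')}) :
    hoSemi2 α V 0 σ ≤ hoSemi2 α V 0 ρ + (σ - ρ) ^ (2 * (α' - α)) * hoSemi2 α' V ρ σ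
      + hoSemi α W 0 ρ * hoSemi α' W ρ σ * (σ - ρ) ^ (α' - α) := by
  set A := hoSemi α W 0 ρ with hAdef
  set HW := hoSemi α' W ρ σ with hHWdef
  set B := hoSemi2 α V 0 ρ with hBdef
  set HV := hoSemi2 α' V ρ σ with hHVdef
  have hA : 0 ≤ A := hoSemi_nonneg _ _ _ _
  have hHW : 0 ≤ HW := hoSemi_nonneg _ _ _ _
  have hB : 0 ≤ B := hoSemi2_nonneg _ _ _ _
  have hHV : 0 ≤ HV := hoSemi2_nonneg _ _ _ _
  have hP : 0 ≤ (σ - ρ) ^ (α' - α) := Real.rpow_nonneg (by linarith) _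
  have hP2 : 0 ≤ (σ - ρ) ^ (2 * (α' - α)) := Real.rpow_nonneg (by linarith) _
  apply hoSemi2_le (by positivity)
  intro s t hs hst htσ
  have ht0 : (0:ℝ) < t - s := by linarith
  have n1 : (0:ℝ) ≤ (t - s) ^ (2 * α) := Real.rpow_nonneg ht0.le _
  rcases le_or_gt t ρ with h1 | h1
  · have := le_hoSemi2 hbV0 hs hst h1
    nlinarith [mul_nonneg hP2 hHV, mul_nonneg (mul_nonneg hA hHW) hP]
  · rcases le_or_gt ρ s with h2 | h2
    · -- ρ ≤ s < t ≤ σ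
      have key : ‖V s t‖ ≤ HV * (t - s) ^ (2 * α') :=
        (div_le_iff₀ (Real.rpow_pos_of_pos ht0 _)).mp (le_hoSemi2 hbV1 h2 hst htσ)
      rw [div_le_iff₀ (Real.rpow_pos_of_pos ht0 _)]
      have b2 : (t - s) ^ (2 * α') = (t - s) ^ (2 * (α' - α)) * (t - s) ^ (2 * α) := by
        rw [← Real.rpow_add ht0]; ring_nf
      have b1 : (t - s) ^ (2 * (α' - α)) ≤ (σ - ρ) ^ (2 * (α' - α)) :=
        Real.rpow_le_rpow ht0.le (by linarith) (by linarith)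
      calc ‖V s t‖ ≤ HV * (t - s) ^ (2 * α') := key
        _ ≤ (B + (σ - ρ) ^ (2 * (α' - α)) * HV + A * HW * (σ - ρ) ^ (α' - α)) * (t - s) ^ (2 * α) := by
            rw [b2]
            nlinarith [mul_le_mul_of_nonneg_left (mul_le_mul_of_nonneg_right b1 n1) hHV,
              mul_nonneg (mul_nonneg hA hHW) hP, hB]
    · -- s < ρ < t
      have h3 : (0:ℝ) < ρ - s := by linarith
      have h4 : (0:ℝ) < t - ρ := by linarith
      have e1 : ‖V s ρ‖ ≤ B * (ρ - s) ^ (2 * α) :=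
        (div_le_iff₀ (Real.rpow_pos_of_pos h3 _)).mp (le_hoSemi2 hbV0 hs h2 le_rfl)
      have e2 : ‖V ρ t‖ ≤ HV * (t - ρ) ^ (2 * α') :=
        (div_le_iff₀ (Real.rpow_pos_of_pos h4 _)).mp (le_hoSemi2 hbV1 le_rfl h1 htσ)
      have e3 : ‖W ρ - W s‖ ≤ A * (ρ - s) ^ α :=
        (div_le_iff₀ (Real.rpow_pos_of_pos h3 _)).mp (le_hoSemi hbW0 hs h2 le_rfl)
      have e4 : ‖W t - W ρ‖ ≤ HW * (t - ρ) ^ α' :=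
        (div_le_iff₀ (Real.rpow_pos_of_pos h4 _)).mp (le_hoSemi hbW1 le_rfl h1 htσ)
      have chen := hChen s t hs h2 h1 htσ
      have tri : ‖V s t‖ ≤ ‖V s ρ‖ + ‖V ρ t‖ + ‖W ρ - W s‖ * ‖W t - W ρ‖ := by
        have hdecomp : V s t = V s ρ + V ρ t + (fun k l => (W ρ k - W s k) * (W t l - W ρ l)) := by
          have := chen
          rw [sub_sub, sub_eq_iff_eq_add] at this
          rw [this]; abel
        calc ‖V s t‖ = ‖V s ρ + V ρ t + (fun k l => (W ρ k - W s k) * (W t l - W ρ l))‖ := by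
              rw [← hdecomp]
          _ ≤ ‖V s ρ‖ + ‖V ρ t‖ + ‖(fun k l => (W ρ k - W s k) * (W t l - W ρ l) :
                Fin d → Fin d → ℝ)‖ := norm_add₃_le
          _ ≤ ‖V s ρ‖ + ‖V ρ t‖ + ‖W ρ - W s‖ * ‖W t - W ρ‖ := by
              have h := outer_norm_le (W ρ - W s) (W t - W ρ)
              simp only [Pi.sub_apply] at h
              linarith
      rw [div_le_iff₀ (Real.rpow_pos_of_pos ht0 _)]
      -- bounds on the three pieces
      have nρs : (0:ℝ) ≤ (ρ - s) ^ α := Real.rpow_nonneg h3.le _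
      have ntρ : (0:ℝ) ≤ (t - ρ) ^ α := Real.rpow_nonneg h4.le _
      have nts : (0:ℝ) ≤ (t - s) ^ α := Real.rpow_nonneg ht0.le _
      -- piece 1 : B * (ρ-s)^{2α} ≤ B * (t-s)^{2α}
      have p1 : (ρ - s) ^ (2 * α) ≤ (t - s) ^ (2 * α) :=
        Real.rpow_le_rpow h3.le (by linarith) (by linarith)
      -- piece 2 : HV * (t-ρ)^{2α'} ≤ HV * (σ-ρ)^{2(α'-α)} * (t-s)^{2α}
      have p2 : (t - ρ) ^ (2 * α') ≤ (σ - ρ) ^ (2 * (α' - α)) * (t - s) ^ (2 * α) := by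
        have b2 : (t - ρ) ^ (2 * α') = (t - ρ) ^ (2 * (α' - α)) * (t - ρ) ^ (2 * α) := by
          rw [← Real.rpow_add h4]; ring_nf
        have c1 : (t - ρ) ^ (2 * (α' - α)) ≤ (σ - ρ) ^ (2 * (α' - α)) :=
          Real.rpow_le_rpow h4.le (by linarith) (by linarith)
        have c2 : (t - ρ) ^ (2 * α) ≤ (t - s) ^ (2 * α) :=
          Real.rpow_le_rpow h4.le (by linarith) (by linarith)
        rw [b2]
        exact mul_le_mul c1 c2 (Real.rpow_nonneg h4.le _) hP2
      -- piece 3 : (ρ-s)^α * (t-ρ)^{α'} ≤ (σ-ρ)^{α'-α} * (t-s)^{2α}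
      have p3 : (ρ - s) ^ α * (t - ρ) ^ α' ≤ (σ - ρ) ^ (α' - α) * (t - s) ^ (2 * α) := by
        have b2 : (t - ρ) ^ α' = (t - ρ) ^ (α' - α) * (t - ρ) ^ α := by
          rw [← Real.rpow_add h4, sub_add_cancel]
        have c1 : (t - ρ) ^ (α' - α) ≤ (σ - ρ) ^ (α' - α) :=
          Real.rpow_le_rpow h4.le (by linarith) (by linarith)
        have c2 : (t - ρ) ^ α ≤ (t - s) ^ α := Real.rpow_le_rpow h4.le (by linarith) hα.le
        have c3 : (ρ - s) ^ α ≤ (t - s) ^ α := Real.rpow_le_rpow h3.le (by linarith) hα.le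
        have c4 : (t - s) ^ α * (t - s) ^ α = (t - s) ^ (2 * α) := by
          rw [← Real.rpow_add ht0]; ring_nf
        calc (ρ - s) ^ α * (t - ρ) ^ α'
            = (t - ρ) ^ (α' - α) * ((ρ - s) ^ α * (t - ρ) ^ α) := by rw [b2]; ring
          _ ≤ (σ - ρ) ^ (α' - α) * ((t - s) ^ α * (t - s) ^ α) := by
              have := mul_le_mul c3 c2 ntρ nts
              have nn : (0:ℝ) ≤ (ρ - s) ^ α * (t - ρ) ^ α := mul_nonneg nρs ntρ
              exact mul_le_mul c1 this nn hP
          _ = (σ - ρ) ^ (α' - α) * (t - s) ^ (2 * α) := by rw [c4]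
      -- assemble
      have outer : ‖W ρ - W s‖ * ‖W t - W ρ‖ ≤ A * HW * ((ρ - s) ^ α * (t - ρ) ^ α') := by
        have := mul_le_mul e3 e4 (norm_nonneg _) (mul_nonneg hA nρs)
        nlinarith
      calc ‖V s t‖ ≤ ‖V s ρ‖ + ‖V ρ t‖ + ‖W ρ - W s‖ * ‖W t - W ρ‖ := tri
        _ ≤ B * (t - s) ^ (2 * α) + HV * ((σ - ρ) ^ (2 * (α' - α)) * (t - s) ^ (2 * α))
            + A * HW * ((σ - ρ) ^ (α' - α) * (t - s) ^ (2 * α)) := by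
            have q1 : ‖V s ρ‖ ≤ B * (t - s) ^ (2 * α) :=
              e1.trans (mul_le_mul_of_nonneg_left p1 hB)
            have q2 : ‖V ρ t‖ ≤ HV * ((σ - ρ) ^ (2 * (α' - α)) * (t - s) ^ (2 * α)) :=
              e2.trans (mul_le_mul_of_nonneg_left p2 hHV)
            have q3 : ‖W ρ - W s‖ * ‖W t - W ρ‖
                ≤ A * HW * ((σ - ρ) ^ (α' - α) * (t - s) ^ (2 * α)) :=
              outer.trans (mul_le_mul_of_nonneg_left p3 (mul_nonneg hA hHW))
            linarith
        _ = (B + (σ - ρ) ^ (2 * (α' - α)) * HV + A * HW * (σ - ρ) ^ (α' - α)) * (t - s) ^ (2 * α) := by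
            ring

end Stmt7

/-- truncation stability of the inhomogeneous rough path norm
`‖(W,𝕎)‖_{α,[0,τ]} = ⟦W⟧_{α,[0,τ]} + ⟦𝕎⟧_{2α,[0,τ]}`, and in particular continuity in `τ`. -/
theorem stmt7 {d : ℕ} (T τ₀ α α' : ℝ)
    (W : ℝ → (Fin d → ℝ)) (V : ℝ → ℝ → (Fin d → Fin d → ℝ))
    (h13 : 1/3 < α) (hαα' : α < α') (h12 : α' < 1/2)
    (hτ₀ : 0 < τ₀) (hτ₀T : τ₀ < T)
    (hW : ∃ C : ℝ, ∀ s t : ℝ, 0 ≤ s → s ≤ t → t ≤ T → ‖W t - W s‖ ≤ C * (t - s) ^ α')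
    (hV : ∃ C : ℝ, ∀ s t : ℝ, 0 ≤ s → s ≤ t → t ≤ T → ‖V s t‖ ≤ C * (t - s) ^ (2 * α'))
    (hChen : ∀ s u t : ℝ, 0 ≤ s → s ≤ u → u ≤ t → t ≤ T →
      V s t - V s u - V u t = fun k l => (W u k - W s k) * (W t l - W u l)) :
    (∀ τ : ℝ, τ₀ ≤ τ → τ ≤ T →
      |(hoSemi α W 0 τ + hoSemi2 α V 0 τ) - (hoSemi α W 0 τ₀ + hoSemi2 α V 0 τ₀)| ≤
        (τ - τ₀) ^ (2 * (α' - α)) * hoSemi2 α' V τ₀ τ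
          + (hoSemi α W 0 τ₀ + 1) * hoSemi α' W τ₀ τ * (τ - τ₀) ^ (α' - α)) ∧
    ContinuousOn (fun τ => hoSemi α W 0 τ + hoSemi2 α V 0 τ) (Icc 0 T) := by
  have hα : 0 < α := by linarith
  have hα' : 0 < α' := by linarith
  have hT : 0 < T := by linarith
  obtain ⟨C₀W, hC₀W⟩ := hW
  obtain ⟨C₀V, hC₀V⟩ := hV
  set CW := max C₀W 0 with hCWdef
  set CV := max C₀V 0 with hCVdef
  have hCW0 : 0 ≤ CW := le_max_right _ _
  have hCV0 : 0 ≤ CV := le_max_right _ _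
  have hCW : ∀ s t : ℝ, 0 ≤ s → s ≤ t → t ≤ T → ‖W t - W s‖ ≤ CW * (t - s) ^ α' := by
    intro s t hs hst htT
    exact (hC₀W s t hs hst htT).trans
      (mul_le_mul_of_nonneg_right (le_max_left _ _) (Real.rpow_nonneg (by linarith) _))
  have hCV : ∀ s t : ℝ, 0 ≤ s → s ≤ t → t ≤ T → ‖V s t‖ ≤ CV * (t - s) ^ (2 * α') := by
    intro s t hs hst htT
    exact (hC₀V s t hs hst htT).trans
      (mul_le_mul_of_nonneg_right (le_max_left _ _) (Real.rpow_nonneg (by linarith) _))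
  -- boundedness of all the relevant sets
  have hbW : ∀ a b : ℝ, 0 ≤ a → b ≤ T →
      BddAbove {c : ℝ | ∃ s t : ℝ, a ≤ s ∧ s < t ∧ t ≤ b ∧ c = ‖W t - W s‖ / (t - s) ^ α} :=
    fun a b ha hb => Stmt7.bdd1 hα hαα'.le hCW0
      (fun s t hs hst htb => hCW s t (ha.trans hs) hst (htb.trans hb))
  have hbW' : ∀ a b : ℝ, 0 ≤ a → b ≤ T →
      BddAbove {c : ℝ | ∃ s t : ℝ, a ≤ s ∧ s < t ∧ t ≤ b ∧ c = ‖W t - W s‖ / (t - s) ^ α'} :=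
    fun a b ha hb => Stmt7.bdd1 hα' le_rfl hCW0
      (fun s t hs hst htb => hCW s t (ha.trans hs) hst (htb.trans hb))
  have hbV : ∀ a b : ℝ, 0 ≤ a → b ≤ T →
      BddAbove {c : ℝ | ∃ s t : ℝ, a ≤ s ∧ s < t ∧ t ≤ b ∧ c = ‖V s t‖ / (t - s) ^ (2 * α)} :=
    fun a b ha hb => Stmt7.bdd2 hα hαα'.le hCV0
      (fun s t hs hst htb => hCV s t (ha.trans hs) hst (htb.trans hb))
  have hbV' : ∀ a b : ℝ, 0 ≤ a → b ≤ T →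
      BddAbove {c : ℝ | ∃ s t : ℝ, a ≤ s ∧ s < t ∧ t ≤ b ∧ c = ‖V s t‖ / (t - s) ^ (2 * α')} :=
    fun a b ha hb => Stmt7.bdd2 hα' le_rfl hCV0
      (fun s t hs hst htb => hCV s t (ha.trans hs) hst (htb.trans hb))
  set F : ℝ → ℝ := fun τ => hoSemi α W 0 τ + hoSemi2 α V 0 τ with hFdef
  -- monotonicity of F
  have monoW : ∀ ρ σ : ℝ, ρ ≤ σ → σ ≤ T → hoSemi α W 0 ρ ≤ hoSemi α W 0 σ := by
    intro ρ σ hρσ hσT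
    exact Stmt7.hoSemi_le (Stmt7.hoSemi_nonneg _ _ _ _)
      (fun s t hs hst htb => Stmt7.le_hoSemi (hbW 0 σ le_rfl hσT) hs hst (htb.trans hρσ))
  have monoV : ∀ ρ σ : ℝ, ρ ≤ σ → σ ≤ T → hoSemi2 α V 0 ρ ≤ hoSemi2 α V 0 σ := by
    intro ρ σ hρσ hσT
    exact Stmt7.hoSemi2_le (Stmt7.hoSemi2_nonneg _ _ _ _)
      (fun s t hs hst htb => Stmt7.le_hoSemi2 (hbV 0 σ le_rfl hσT) hs hst (htb.trans hρσ))
  have monoF : ∀ ρ σ : ℝ, ρ ≤ σ → σ ≤ T → F ρ ≤ F σ := by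
    intro ρ σ h1 h2
    have := monoW ρ σ h1 h2
    have := monoV ρ σ h1 h2
    simp only [hFdef]
    linarith
  -- the key estimate
  have key : ∀ ρ σ : ℝ, 0 ≤ ρ → ρ ≤ σ → σ ≤ T →
      F σ ≤ F ρ + (σ - ρ) ^ (2 * (α' - α)) * hoSemi2 α' V ρ σ
        + (hoSemi α W 0 ρ + 1) * hoSemi α' W ρ σ * (σ - ρ) ^ (α' - α) := by
    intro ρ σ hρ hρσ hσT
    have hρT : ρ ≤ T := hρσ.trans hσT
    have sW := Stmt7.stepW hα hαα' hρ hρσ (hbW 0 ρ le_rfl hρT) (hbW' ρ σ hρ hσT)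
    have sV := Stmt7.stepV hα hαα' hρ hρσ
      (fun s t hs hsρ hρt htσ => hChen s ρ t hs hsρ.le hρt.le (htσ.trans hσT))
      (hbW 0 ρ le_rfl hρT) (hbW' ρ σ hρ hσT) (hbV 0 ρ le_rfl hρT) (hbV' ρ σ hρ hσT)
    simp only [hFdef]
    nlinarith [sW, sV]
  constructor
  · -- part 1
    intro τ hτ₀τ hτT
    rw [abs_of_nonneg (sub_nonneg.mpr (monoF τ₀ τ hτ₀τ hτT))]
    have := key τ₀ τ hτ₀.le hτ₀τ hτT
    linarith
  · -- part 2 : continuity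
    have hp : 0 < α' - α := by linarith
    set MA : ℝ := CW * (1 + T) ^ (α' - α) with hMAdef
    have hMA0 : 0 ≤ MA := mul_nonneg hCW0 (Real.rpow_nonneg (by linarith) _)
    have boundA : ∀ ρ : ℝ, 0 ≤ ρ → ρ ≤ T → hoSemi α W 0 ρ ≤ MA := by
      intro ρ hρ hρT
      apply Stmt7.hoSemi_le hMA0
      intro s t hs hst htb
      have h1 : ‖W t - W s‖ / (t - s) ^ α ≤ CW * (1 + (ρ - 0)) ^ (α' - α) :=
        Stmt7.el_bound hα hαα'.le hCW0
          (fun s t hs hst htb => hCW s t hs hst (htb.trans hρT)) hs hst htb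
      refine h1.trans ?_
      apply mul_le_mul_of_nonneg_left _ hCW0
      exact Real.rpow_le_rpow (by linarith) (by linarith) (by linarith)
    have boundHW : ∀ ρ σ : ℝ, 0 ≤ ρ → σ ≤ T → hoSemi α' W ρ σ ≤ CW := by
      intro ρ σ hρ hσT
      apply Stmt7.hoSemi_le hCW0
      intro s t hs hst htb
      have h0 : (0:ℝ) < t - s := by linarith
      rw [div_le_iff₀ (Real.rpow_pos_of_pos h0 _)]
      exact hCW s t (hρ.trans hs) hst.le (htb.trans hσT)
    have boundHV : ∀ ρ σ : ℝ, 0 ≤ ρ → σ ≤ T → hoSemi2 α' V ρ σ ≤ CV := by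
      intro ρ σ hρ hσT
      apply Stmt7.hoSemi2_le hCV0
      intro s t hs hst htb
      have h0 : (0:ℝ) < t - s := by linarith
      rw [div_le_iff₀ (Real.rpow_pos_of_pos h0 _)]
      exact hCV s t (hρ.trans hs) hst.le (htb.trans hσT)
    set g : ℝ → ℝ := fun u => CV * u ^ (2 * (α' - α)) + (MA + 1) * CW * u ^ (α' - α) with hgdef
    have est : ∀ ρ σ : ℝ, 0 ≤ ρ → ρ ≤ σ → σ ≤ T → |F σ - F ρ| ≤ g (σ - ρ) := by
      intro ρ σ hρ hρσ hσT
      rw [abs_of_nonneg (sub_nonneg.mpr (monoF ρ σ hρσ hσT))]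
      have h1 := key ρ σ hρ hρσ hσT
      have hP : 0 ≤ (σ - ρ) ^ (α' - α) := Real.rpow_nonneg (by linarith) _
      have hP2 : 0 ≤ (σ - ρ) ^ (2 * (α' - α)) := Real.rpow_nonneg (by linarith) _
      have h2 : (σ - ρ) ^ (2 * (α' - α)) * hoSemi2 α' V ρ σ ≤ CV * (σ - ρ) ^ (2 * (α' - α)) := by
        have := boundHV ρ σ hρ hσT
        nlinarith [Stmt7.hoSemi2_nonneg α' V ρ σ]
      have h3 : (hoSemi α W 0 ρ + 1) * hoSemi α' W ρ σ * (σ - ρ) ^ (α' - α)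
          ≤ (MA + 1) * CW * (σ - ρ) ^ (α' - α) := by
        have hA := boundA ρ hρ (hρσ.trans hσT)
        have hHW := boundHW ρ σ hρ hσT
        have hAnn := Stmt7.hoSemi_nonneg α W 0 ρ
        have hHWnn := Stmt7.hoSemi_nonneg α' W ρ σ
        have hprod : (hoSemi α W 0 ρ + 1) * hoSemi α' W ρ σ ≤ (MA + 1) * CW :=
          mul_le_mul (by linarith) hHW hHWnn (by linarith)
        exact mul_le_mul_of_nonneg_right hprod hP
      simp only [hgdef]
      linarith
    intro x hx
    have hx0 : 0 ≤ x := hx.1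
    have hxT : x ≤ T := hx.2
    have habs2 : ∀ y ∈ Icc (0:ℝ) T, |F y - F x| ≤ g |y - x| := by
      intro y hy
      rcases le_total x y with h | h
      · rw [abs_of_nonneg (by linarith : (0:ℝ) ≤ y - x)]
        exact est x y hx0 h hy.2
      · rw [abs_sub_comm, abs_of_nonpos (by linarith : y - x ≤ 0), show -(y - x) = x - y by ring]
        exact est y x hy.1 h hxT
    have hg0 : g 0 = 0 := by
      simp only [hgdef]
      rw [Real.zero_rpow (by nlinarith : 2 * (α' - α) ≠ 0), Real.zero_rpow hp.ne']
      ring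
    have hgc : ContinuousAt g 0 := by
      have c1 : ContinuousAt (fun u : ℝ => u ^ (2 * (α' - α))) 0 :=
        Real.continuousAt_rpow_const 0 _ (Or.inr (by linarith))
      have c2 : ContinuousAt (fun u : ℝ => u ^ (α' - α)) 0 :=
        Real.continuousAt_rpow_const 0 _ (Or.inr hp.le)
      exact (continuousAt_const.mul c1).add (continuousAt_const.mul c2)
    have htends : Filter.Tendsto (fun y : ℝ => |y - x|) (nhdsWithin x (Icc 0 T)) (nhds 0) := by
      have : ContinuousAt (fun y : ℝ => |y - x|) x :=
        (continuous_abs.comp (continuous_sub_right x)).continuousAt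
      have h := this.tendsto
      simp only [sub_self, abs_zero] at h
      exact h.mono_left nhdsWithin_le_nhds
    have hgten : Filter.Tendsto (fun y : ℝ => g |y - x|) (nhdsWithin x (Icc 0 T)) (nhds 0) := by
      have := hgc.tendsto.comp htends
      rwa [hg0] at this
    have hsq : Filter.Tendsto (fun y : ℝ => F y - F x) (nhdsWithin x (Icc 0 T)) (nhds 0) := by
      apply squeeze_zero_norm' _ hgten
      filter_upwards [self_mem_nhdsWithin] with y hy
      rw [Real.norm_eq_abs]
      exact habs2 y hy
    have : Filter.Tendsto F (nhdsWithin x (Icc 0 T)) (nhds (F x)) := by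
      have h := hsq.add (tendsto_const_nhds (x := F x))
      simp only [sub_add_cancel, zero_add] at h
      exact h
    exact this
end

section
/- Subexponential class is closed under the stopping-time reparametrization: suppose for every i ∈ ℤ⁻, r(i) ≥ 0 and T_i < 0 with T_i ∈ (T_{i-1}, T_i] indexing, and suppose limsup_{t→−∞} (log⁺ r̃(t))/|t| = 0 for a function r̃ : ℝ → ℝ≥0, where r(i) = sup_{t∈(T_{i-1},T_i]} r̃(t) (finite for each i). If liminf_{i→−∞} |T_{i-1}|/|i| ≥ d > 0 and |T_{i-1}|/|i| ≤ 2 for all large |i|, then limsup_{i→−∞} (log⁺ r(i))/|i| = 0. -/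
open Filter Set

/-- the subexponential class is closed under the stopping-time
reparametrization: if `r̃` grows subexponentially along `t → −∞` and
`r(i) = sup_{t ∈ (T_{i−1},T_i]} r̃(t)` with `liminf |T_{i−1}|/|i| ≥ d > 0` and
`|T_{i−1}|/|i| ≤ 2` eventually, then `r` grows subexponentially along `i → −∞`. -/
theorem stmt18 (T : ℤ → ℝ) (rt : ℝ → ℝ) (r : ℤ → ℝ) (d : ℝ) (hd : 0 < d)
    (hT0 : T 0 = 0)
    (hTneg : ∀ i : ℤ, i < 0 → T i < 0)
    (hTmono : StrictMono T)
    (hgap : ∀ i : ℤ, T i - T (i - 1) ≤ 1)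
    (hrt0 : ∀ t : ℝ, 0 ≤ rt t)
    (hr : ∀ i : ℤ, i ≤ 0 → IsLUB (rt '' Ioc (T (i - 1)) (T i)) (r i))
    (hsub : limsup (fun t : ℝ => max (Real.log (rt t)) 0 / |t|) atBot = 0)
    (hliminf : d ≤ liminf (fun i : ℤ => |T (i - 1)| / |(i : ℝ)|) atBot)
    (hub : ∀ᶠ i : ℤ in atBot, |T (i - 1)| / |(i : ℝ)| ≤ 2) :
    limsup (fun i : ℤ => max (Real.log (r i)) 0 / |(i : ℝ)|) atBot = 0 := by
  have habs : ∀ i : ℤ, i ≤ -1 → (0:ℝ) < |(i:ℝ)| := by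
    intro i hi
    have h1 : (i:ℝ) ≤ -1 := by exact_mod_cast hi
    rw [abs_pos]
    intro h
    rw [h] at h1
    linarith
  have hfnn : ∀ i : ℤ, 0 ≤ max (Real.log (r i)) 0 / |(i:ℝ)| :=
    fun i => div_nonneg (le_max_right _ _) (abs_nonneg _)
  have hgnn : ∀ t : ℝ, 0 ≤ max (Real.log (rt t)) 0 / |t| :=
    fun t => div_nonneg (le_max_right _ _) (abs_nonneg _)
  rw [limsup_eq] at hsub ⊢
  set Sf := {a : ℝ | ∀ᶠ i : ℤ in atBot, max (Real.log (r i)) 0 / |(i:ℝ)| ≤ a} with hSfdef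
  set Sg := {a : ℝ | ∀ᶠ t : ℝ in atBot, max (Real.log (rt t)) 0 / |t| ≤ a} with hSgdef
  have hSfnn : ∀ a ∈ Sf, 0 ≤ a := by
    intro a ha
    obtain ⟨i, hi⟩ := ha.exists
    exact le_trans (hfnn i) hi
  have hSgnn : ∀ a ∈ Sg, 0 ≤ a := by
    intro a ha
    obtain ⟨t, ht⟩ := ha.exists
    exact le_trans (hgnn t) ht
  -- eventual lower bound from the liminf hypothesis
  have hEv : ∀ᶠ i : ℤ in atBot, d/2 < |T (i-1)| / |(i:ℝ)| := by
    have hbound : IsBoundedUnder (· ≥ ·) atBot (fun i : ℤ => |T (i-1)| / |(i:ℝ)|) :=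
      isBoundedUnder_of ⟨0, fun i => div_nonneg (abs_nonneg _) (abs_nonneg _)⟩
    exact eventually_lt_of_lt_liminf (lt_of_lt_of_le (by linarith) hliminf) hbound
  have hEv2 : ∀ᶠ i : ℤ in atBot, T (i-1) ≤ -(d/2) * |(i:ℝ)| := by
    filter_upwards [hEv, eventually_le_atBot (-1:ℤ)] with i h1 h2
    have hTi : T (i-1) < 0 := hTneg _ (by omega)
    have h3 : (0:ℝ) < |(i:ℝ)| := habs i h2
    have h4 := (lt_div_iff₀ h3).mp h1
    rw [abs_of_neg hTi] at h4
    linarith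
  -- T tends to -∞
  have haux : Tendsto (fun i : ℤ => -(d/2) * |(i:ℝ)|) atBot atBot := by
    have h1 : Tendsto (fun i : ℤ => (d/2) * (i:ℝ)) atBot atBot :=
      (tendsto_const_mul_atBot_of_pos (by linarith)).mpr
        (tendsto_intCast_atBot_iff.mpr tendsto_id)
    apply h1.congr'
    filter_upwards [eventually_le_atBot (0:ℤ)] with i hi
    have h2 : (i:ℝ) ≤ 0 := by exact_mod_cast hi
    rw [abs_of_nonpos h2]
    ring
  have hTto : Tendsto T atBot atBot := by
    have h1 : Tendsto (fun i : ℤ => T (i-1)) atBot atBot := tendsto_atBot_mono' _ hEv2 haux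
    have h2 : Tendsto (fun i : ℤ => i + 1) atBot atBot :=
      tendsto_atBot_add_const_right _ 1 tendsto_id
    exact (h1.comp h2).congr (fun i => by simp)
  -- Lemma A : an eventual bound on the continuous side gives one on the discrete side
  have lemA : ∀ a : ℝ, 0 ≤ a → a ∈ Sg → 2*a ∈ Sf := by
    intro a ha0 ha
    obtain ⟨t0, ht0⟩ := eventually_atBot.mp ha
    have hTt0 : ∀ᶠ i : ℤ in atBot, T i ≤ t0 := hTto.eventually (eventually_le_atBot t0)
    simp only [hSfdef, Set.mem_setOf_eq]
    filter_upwards [hub, hTt0, eventually_le_atBot (-1:ℤ)] with i h2 hTi hineg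
    have hipos : (0:ℝ) < |(i:ℝ)| := habs i hineg
    rw [div_le_iff₀ hipos]
    apply max_le _ (by positivity)
    have hubset : ∀ x ∈ rt '' Ioc (T (i-1)) (T i), x ≤ Real.exp (2*a*|(i:ℝ)|) := by
      rintro x ⟨t, ht, rfl⟩
      have htneg : t < 0 := lt_of_le_of_lt ht.2 (hTneg i (by omega))
      have hgt : max (Real.log (rt t)) 0 / |t| ≤ a := ht0 t (le_trans ht.2 hTi)
      have htpos : (0:ℝ) < |t| := abs_pos.mpr (ne_of_lt htneg)
      have hlog : Real.log (rt t) ≤ a * |t| :=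
        le_trans (le_max_left _ _) ((div_le_iff₀ htpos).mp hgt)
      have hTi1 : T (i-1) < 0 := hTneg _ (by omega)
      have htabs : |t| ≤ |T (i-1)| := by
        rw [abs_of_neg htneg, abs_of_neg hTi1]
        linarith [ht.1]
      have hT2 : |T (i-1)| ≤ 2 * |(i:ℝ)| := (div_le_iff₀ hipos).mp h2
      have hlog2 : Real.log (rt t) ≤ 2*a*|(i:ℝ)| := by nlinarith [abs_nonneg t]
      rcases eq_or_lt_of_le (hrt0 t) with h|h
      · exact le_trans (le_of_eq h.symm) (Real.exp_pos _).le
      · calc rt t = Real.exp (Real.log (rt t)) := (Real.exp_log h).symm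
          _ ≤ _ := Real.exp_le_exp.mpr hlog2
    have hlub := hr i (by omega)
    have hri : r i ≤ Real.exp (2*a*|(i:ℝ)|) := hlub.2 hubset
    have hmem : rt (T i) ∈ rt '' Ioc (T (i-1)) (T i) :=
      ⟨T i, ⟨hTmono (by omega), le_refl _⟩, rfl⟩
    have hri0 : 0 ≤ r i := le_trans (hrt0 (T i)) (hlub.1 hmem)
    rcases eq_or_lt_of_le hri0 with h|h
    · rw [← h, Real.log_zero]
      positivity
    · exact (Real.log_le_iff_le_exp h).mpr hri
  -- Lemma B : an eventual bound on the discrete side gives one on the continuous side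
  have lemB : ∀ a : ℝ, 0 ≤ a → a ∈ Sf → 4*a/d ∈ Sg := by
    intro a ha0 ha
    obtain ⟨i0, hi0⟩ := eventually_atBot.mp ((ha.and hEv).and (eventually_le_atBot (-3:ℤ)))
    have hi0le : i0 ≤ -3 := (hi0 i0 le_rfl).2
    simp only [hSgdef, Set.mem_setOf_eq]
    rw [eventually_atBot]
    refine ⟨T (i0 - 1) - 1, fun t hht => ?_⟩
    have htlt : t < T (i0 - 1) := by linarith
    have ht0 : t < 0 := lt_trans htlt (hTneg _ (by omega))
    obtain ⟨n, hn⟩ := eventually_atBot.mp (hTto.eventually (eventually_lt_atBot t))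
    obtain ⟨j, hjS, hjmin⟩ := Int.exists_least_of_bdd (P := fun z => t ≤ T z)
      ⟨n+1, fun z hz => by
        by_contra hc
        push_neg at hc
        exact absurd (hn z (by omega)) (not_lt.mpr hz)⟩
      ⟨0, by show t ≤ T 0; rw [hT0]; linarith⟩
    have hj1 : T (j-1) < t := by
      by_contra hc
      push_neg at hc
      have := hjmin (j-1) hc
      omega
    have hji0 : j ≤ i0 - 1 := by
      by_contra hc
      push_neg at hc
      have h1 : T (i0-1) ≤ T (j-1) := hTmono.monotone (by omega)
      linarith
    have hfj : max (Real.log (r j)) 0 / |(j:ℝ)| ≤ a := ((hi0 j (by omega)).1).1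
    have hdj : d/2 < |T j| / |((j+1 : ℤ):ℝ)| := by
      have := ((hi0 (j+1) (by omega)).1).2
      simpa using this
    have hj4 : j ≤ -4 := by omega
    have hjabs : (0:ℝ) < |(j:ℝ)| := habs j (by omega)
    have hj1abs : (0:ℝ) < |((j+1:ℤ):ℝ)| := habs (j+1) (by omega)
    have hTjneg : T j < 0 := hTneg j (by omega)
    have hTjabs : (0:ℝ) < |T j| := abs_pos.mpr (ne_of_lt hTjneg)
    have htabs : |T j| ≤ |t| := by
      rw [abs_of_neg hTjneg, abs_of_neg ht0]
      linarith [hjS]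
    have hTjge : d/2 * |((j+1:ℤ):ℝ)| ≤ |T j| := by
      have := (lt_div_iff₀ hj1abs).mp hdj
      linarith
    have hjj1 : |(j:ℝ)| ≤ 2 * |((j+1:ℤ):ℝ)| := by
      have h1 : ((j:ℝ)) ≤ -4 := by exact_mod_cast hj4
      have h2 : ((j+1:ℤ):ℝ) = (j:ℝ) + 1 := by push_cast; ring
      rw [abs_of_nonpos (by linarith), h2, abs_of_nonpos (by linarith)]
      linarith
    have hlub := hr j (by omega)
    have hrtle : rt t ≤ r j := hlub.1 ⟨t, ⟨hj1, hjS⟩, rfl⟩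
    have hlog1 : max (Real.log (rt t)) 0 ≤ max (Real.log (r j)) 0 := by
      apply max_le _ (le_max_right _ _)
      rcases eq_or_lt_of_le (hrt0 t) with h|h
      · rw [← h, Real.log_zero]
        exact le_max_right _ _
      · exact le_trans (Real.log_le_log h hrtle) (le_max_left _ _)
    have hlog2 : max (Real.log (r j)) 0 ≤ a * |(j:ℝ)| := (div_le_iff₀ hjabs).mp hfj
    have htpos : (0:ℝ) < |t| := lt_of_lt_of_le hTjabs htabs
    rw [div_le_iff₀ htpos]
    calc max (Real.log (rt t)) 0 ≤ a * |(j:ℝ)| := le_trans hlog1 hlog2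
      _ ≤ a * (2 * |((j+1:ℤ):ℝ)|) := by nlinarith
      _ = (4*a/d) * (d/2 * |((j+1:ℤ):ℝ)|) := by field_simp; ring
      _ ≤ (4*a/d) * |T j| := mul_le_mul_of_nonneg_left hTjge (by positivity)
      _ ≤ (4*a/d) * |t| := mul_le_mul_of_nonneg_left htabs (by positivity)
  -- conclusion
  rcases Set.eq_empty_or_nonempty Sg with hSgE | hSgNE
  · have hSfE : Sf = ∅ := by
      rw [Set.eq_empty_iff_forall_notMem]
      intro a ha
      have := lemB a (hSfnn a ha) ha
      rw [hSgE] at this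
      exact absurd this (notMem_empty _)
    rw [hSfE, Real.sInf_empty]
  · have h0 : 0 ≤ sInf Sf := Real.sInf_nonneg hSfnn
    by_contra hne
    have hpos : 0 < sInf Sf := lt_of_le_of_ne h0 (Ne.symm hne)
    have hbd : BddBelow Sg := ⟨0, fun a ha => hSgnn a ha⟩
    have hlt : sInf Sg < sInf Sf / 2 := by rw [hsub]; linarith
    obtain ⟨a, haSg, halt⟩ := (csInf_lt_iff hbd hSgNE).mp hlt
    have h2a : 2*a ∈ Sf := lemA a (hSgnn a haSg) haSg
    have hle : sInf Sf ≤ 2*a := csInf_le ⟨0, fun b hb => hSfnn b hb⟩ h2a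
    linarith
end
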